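/- arXiv:1805.10529 — 11 statements merged into one kernel-verified Lean document; each statement's English description precedes it below -/
import Mathlib

section
/- For positive real numbers a, b and t ∈ [0,1], with r = min{t, 1-t} and R = max{t, 1-t}, one has a^{1-t} b^t + r(a + b - 2√(ab)) ≤ (1-t)a + t b ≤ a^{1-t} b^t + R(a + b - 2√(ab)). -/
lemma km_aux (a b t : ℝ) (ha : 0 < a) (hb : 0 < b) (ht0 : 0 ≤ t) (ht : t ≤ 1/2) :
    a ^ (1 - t) * b ^ t + t * (a + b - 2 * Real.sqrt (a * b)) ≤ (1 - t) * a + t * b ∧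
    (1 - t) * a + t * b ≤ a ^ (1 - t) * b ^ t + (1 - t) * (a + b - 2 * Real.sqrt (a * b)) := by
  have h1t : (0:ℝ) < 1 - t := by linarith
  have hs : Real.sqrt (a * b) = a ^ ((1:ℝ)/2) * b ^ ((1:ℝ)/2) := by
    rw [Real.sqrt_eq_rpow, Real.mul_rpow ha.le hb.le]
  constructor
  · have key : a ^ (1 - 2*t) * (Real.sqrt (a*b)) ^ (2*t) ≤
        (1 - 2*t) * a + (2*t) * (Real.sqrt (a*b)) :=
      Real.geom_mean_le_arith_mean2_weighted (by linarith) (by linarith) ha.le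
        (Real.sqrt_nonneg _) (by ring)
    have heq : a ^ (1 - 2*t) * (Real.sqrt (a*b)) ^ (2*t) = a ^ (1 - t) * b ^ t := by
      rw [hs, Real.mul_rpow (Real.rpow_nonneg ha.le _) (Real.rpow_nonneg hb.le _),
        ← Real.rpow_mul ha.le, ← Real.rpow_mul hb.le, ← mul_assoc, ← Real.rpow_add ha]
      congr 1 <;> congr 1 <;> ring
    rw [heq] at key
    linarith
  · set α : ℝ := 1 / (2 * (1 - t)) with hα
    have hα0 : 0 ≤ α := by positivity
    have hα1 : α ≤ 1 := by
      rw [hα, div_le_one (by linarith)]; linarith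
    have key : (a ^ (1-t) * b ^ t) ^ α * b ^ (1 - α) ≤
        α * (a ^ (1-t) * b ^ t) + (1 - α) * b :=
      Real.geom_mean_le_arith_mean2_weighted hα0 (by linarith)
        (by positivity) hb.le (by ring)
    have heq : (a ^ (1-t) * b ^ t) ^ α * b ^ (1 - α) = Real.sqrt (a*b) := by
      rw [hs, Real.mul_rpow (Real.rpow_nonneg ha.le _) (Real.rpow_nonneg hb.le _),
        ← Real.rpow_mul ha.le, ← Real.rpow_mul hb.le, mul_assoc, ← Real.rpow_add hb, hα]
      congr 1 <;> congr 1 <;> field_simp <;> ring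
    rw [heq] at key
    have h2 : 2 * (1 - t) * Real.sqrt (a*b) ≤
        2 * (1 - t) * (α * (a ^ (1-t) * b ^ t) + (1 - α) * b) := by
      apply mul_le_mul_of_nonneg_left key (by linarith)
    have hαe : 2 * (1 - t) * α = 1 := by
      rw [hα]; field_simp
    have e : 2 * (1 - t) * (α * (a ^ (1-t) * b ^ t) + (1 - α) * b) =
        (2 * (1 - t) * α) * (a ^ (1-t) * b ^ t) + 2 * (1 - t) * b - (2 * (1 - t) * α) * b := by
      ring
    rw [hαe] at e
    linarith [h2, e.le, e.ge]

/-- Kittaneh–Manasrah refinement and reverse of Young's inequality (scalar form). -/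
theorem kittaneh_manasrah_young (a b t : ℝ) (ha : 0 < a) (hb : 0 < b)
    (ht0 : 0 ≤ t) (ht1 : t ≤ 1) :
    a ^ (1 - t) * b ^ t + min t (1 - t) * (a + b - 2 * Real.sqrt (a * b)) ≤ (1 - t) * a + t * b ∧
    (1 - t) * a + t * b ≤ a ^ (1 - t) * b ^ t + max t (1 - t) * (a + b - 2 * Real.sqrt (a * b)) := by
  rcases le_or_gt t (1/2) with h | h
  · rw [min_eq_left (by linarith), max_eq_right (by linarith)]
    exact km_aux a b t ha hb ht0 h
  · have this := km_aux b a (1 - t) hb ha (by linarith) (by linarith)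
    rw [show (1:ℝ) - (1 - t) = t by ring, mul_comm b a,
      mul_comm (b ^ t) (a ^ (1 - t))] at this
    rw [min_eq_right (by linarith), max_eq_left (by linarith)]
    constructor
    · linarith [this.1]
    · linarith [this.2]
end

section
/- For positive real numbers a, b and 0 < t ≤ 1/2, with r = min{t,1-t} = t, R = max{t,1-t} = 1-t, and r₀ = min{2t, 1-2t}, one has r₀((ab)^{1/4} - √a)² + t(√a - √b)² + a^{1-t} b^t ≤ (1-t)a + t b. -/
private lemma quarter_pow (a : ℝ) (ha : 0 < a) (n : ℕ) :
    (a ^ ((1:ℝ)/4)) ^ n = a ^ ((n:ℝ)/4) := by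
  rw [← Real.rpow_natCast (a ^ ((1:ℝ)/4)) n, ← Real.rpow_mul ha.le]
  ring_nf

/-- Zhao–Wu refinement of Young's inequality (lower bound), case `0 < t ≤ 1/2`. -/
theorem zhao_wu_young_refinement (a b t : ℝ) (ha : 0 < a) (hb : 0 < b)
    (ht0 : 0 < t) (ht : t ≤ 1 / 2) :
    min (2 * t) (1 - 2 * t) * ((a * b) ^ ((1 : ℝ) / 4) - Real.sqrt a) ^ 2
      + t * (Real.sqrt a - Real.sqrt b) ^ 2 + a ^ (1 - t) * b ^ t
      ≤ (1 - t) * a + t * b := by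
  set u := a ^ ((1:ℝ)/4) with hu_def
  set v := b ^ ((1:ℝ)/4) with hv_def
  have hu : 0 < u := Real.rpow_pos_of_pos ha _
  have hv : 0 < v := Real.rpow_pos_of_pos hb _
  have hu2 : Real.sqrt a = u ^ 2 := by
    rw [hu_def, quarter_pow a ha 2, Real.sqrt_eq_rpow]; norm_num
  have hv2 : Real.sqrt b = v ^ 2 := by
    rw [hv_def, quarter_pow b hb 2, Real.sqrt_eq_rpow]; norm_num
  have hu4 : a = u ^ 4 := by
    rw [hu_def, quarter_pow a ha 4]; norm_num
  have hv4 : b = v ^ 4 := by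
    rw [hv_def, quarter_pow b hb 4]; norm_num
  have huv : (a * b) ^ ((1:ℝ)/4) = u * v := Real.mul_rpow ha.le hb.le
  have hu3 : a ^ ((3:ℝ)/4) = u ^ 3 := by
    rw [hu_def, quarter_pow a ha 3]; norm_num
  have hv1 : b ^ ((1:ℝ)/4) = v := rfl
  have hu2' : a ^ ((1:ℝ)/2) = u ^ 2 := by rw [← Real.sqrt_eq_rpow, hu2]
  have hv2' : b ^ ((1:ℝ)/2) = v ^ 2 := by rw [← Real.sqrt_eq_rpow, hv2]
  rcases le_or_gt t (1/4) with hc | hc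
  · -- min = 2t, key: a^(1-t) b^t ≤ (1-4t) a + 4t a^(3/4) b^(1/4)
    have hmin : min (2*t) (1-2*t) = 2*t := min_eq_left (by linarith)
    have hg := Real.geom_mean_le_arith_mean2_weighted
      (w₁ := 1 - 4*t) (w₂ := 4*t) (p₁ := a) (p₂ := a ^ ((3:ℝ)/4) * b ^ ((1:ℝ)/4))
      (by linarith) (by linarith)
      ha.le (mul_nonneg (Real.rpow_nonneg ha.le _) (Real.rpow_nonneg hb.le _))
      (by ring)
    have hform : a ^ (1 - 4*t) * (a ^ ((3:ℝ)/4) * b ^ ((1:ℝ)/4)) ^ (4*t)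
        = a ^ (1 - t) * b ^ t := by
      rw [Real.mul_rpow (Real.rpow_nonneg ha.le _) (Real.rpow_nonneg hb.le _),
        ← Real.rpow_mul ha.le, ← Real.rpow_mul hb.le, ← mul_assoc,
        ← Real.rpow_add ha]
      norm_num
      rw [show 1 - 4*t + 3/4*(4*t) = 1 - t by ring, show 1/4*(4*t) = t by ring]
    rw [hform] at hg
    rw [hmin, hu2, hv2, huv, hu3, hv1] at *
    nlinarith [hg]
  · -- min = 1-2t, key: a^(1-t) b^t ≤ (4t-1) √(ab) + (2-4t) a^(3/4) b^(1/4)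
    have hmin : min (2*t) (1-2*t) = 1-2*t := min_eq_right (by linarith)
    have hg := Real.geom_mean_le_arith_mean2_weighted
      (w₁ := 4*t - 1) (w₂ := 2 - 4*t)
      (p₁ := a ^ ((1:ℝ)/2) * b ^ ((1:ℝ)/2)) (p₂ := a ^ ((3:ℝ)/4) * b ^ ((1:ℝ)/4))
      (by linarith) (by linarith)
      (mul_nonneg (Real.rpow_nonneg ha.le _) (Real.rpow_nonneg hb.le _))
      (mul_nonneg (Real.rpow_nonneg ha.le _) (Real.rpow_nonneg hb.le _))
      (by ring)
    have hform : (a ^ ((1:ℝ)/2) * b ^ ((1:ℝ)/2)) ^ (4*t - 1)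
        * (a ^ ((3:ℝ)/4) * b ^ ((1:ℝ)/4)) ^ (2 - 4*t) = a ^ (1 - t) * b ^ t := by
      rw [Real.mul_rpow (Real.rpow_nonneg ha.le _) (Real.rpow_nonneg hb.le _),
        Real.mul_rpow (Real.rpow_nonneg ha.le _) (Real.rpow_nonneg hb.le _),
        ← Real.rpow_mul ha.le, ← Real.rpow_mul hb.le,
        ← Real.rpow_mul ha.le, ← Real.rpow_mul hb.le,
        show (a ^ (1/2*(4*t-1)) * b ^ (1/2*(4*t-1))) * (a ^ (3/4*(2-4*t)) * b ^ (1/4*(2-4*t)))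
          = (a ^ (1/2*(4*t-1)) * a ^ (3/4*(2-4*t))) * (b ^ (1/2*(4*t-1)) * b ^ (1/4*(2-4*t))) by ring,
        ← Real.rpow_add ha, ← Real.rpow_add hb,
        show 1/2*(4*t-1) + 3/4*(2-4*t) = 1 - t by ring,
        show 1/2*(4*t-1) + 1/4*(2-4*t) = t by ring]
    rw [hform] at hg
    rw [hmin, hu2, hv2, huv, hu2', hv2', hu3, hv1] at *
    nlinarith [hg]
end

section
/- For positive real numbers a, b and 0 < t ≤ 1/2, with R = max{t,1-t} = 1-t and r₀ = min{2t, 1-2t}, one has (1-t)a + t b ≤ R(√a - √b)² - r₀((ab)^{1/4} - √b)² + a^{1-t} b^t. -/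
/-- Kittaneh–Manasrah refinement (half case): for `0 ≤ u ≤ 1/2`. -/
lemma km_half (x z u : ℝ) (hx : 0 < x) (hz : 0 < z) (hu0 : 0 ≤ u) (hu : u ≤ 1/2) :
    x ^ (1 - u) * z ^ u + u * (Real.sqrt x - Real.sqrt z) ^ 2 ≤ (1 - u) * x + u * z := by
  have hxz : (0:ℝ) < x * z := mul_pos hx hz
  have hgm : x ^ (1 - 2*u) * (Real.sqrt (x*z)) ^ (2*u) ≤ (1 - 2*u) * x + (2*u) * Real.sqrt (x*z) :=
    Real.geom_mean_le_arith_mean2_weighted (by linarith) (by linarith) hx.le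
      (Real.sqrt_nonneg _) (by ring)
  have h1 : (Real.sqrt (x*z)) ^ (2*u : ℝ) = x ^ (u:ℝ) * z ^ (u:ℝ) := by
    rw [Real.sqrt_eq_rpow, ← Real.rpow_mul hxz.le]
    rw [show (1/2) * (2*u) = u by ring, Real.mul_rpow hx.le hz.le]
  have h2 : x ^ (1 - 2*u) * (x ^ (u:ℝ) * z ^ (u:ℝ)) = x ^ (1-u) * z ^ (u:ℝ) := by
    rw [← mul_assoc, ← Real.rpow_add hx, show 1 - 2*u + u = 1 - u by ring]
  rw [h1, h2] at hgm
  have hs : Real.sqrt x * Real.sqrt z = Real.sqrt (x*z) := (Real.sqrt_mul hx.le z).symm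
  nlinarith [Real.sq_sqrt hx.le, Real.sq_sqrt hz.le, hgm]

/-- Kittaneh–Manasrah refinement, full range. -/
lemma km (x z u : ℝ) (hx : 0 < x) (hz : 0 < z) (hu0 : 0 ≤ u) (hu1 : u ≤ 1) :
    x ^ (1 - u) * z ^ u + min u (1-u) * (Real.sqrt x - Real.sqrt z) ^ 2
      ≤ (1 - u) * x + u * z := by
  rcases le_or_gt u (1/2) with h | h
  · rw [min_eq_left (by linarith)]
    exact km_half x z u hx hz hu0 h
  · rw [min_eq_right (by linarith)]
    have := km_half z x (1-u) hz hx (by linarith) (by linarith)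
    rw [show (1 - (1-u)) = u by ring] at this
    have hsq : (Real.sqrt z - Real.sqrt x)^2 = (Real.sqrt x - Real.sqrt z)^2 := by ring
    rw [hsq] at this
    linarith [this]

/-- Zhao–Wu forward refinement for `0 < s ≤ 1/2`. -/
lemma fwd (x y s : ℝ) (hx : 0 < x) (hy : 0 < y) (hs0 : 0 < s) (hs : s ≤ 1/2) :
    x ^ (1 - s) * y ^ s + s * (Real.sqrt x - Real.sqrt y) ^ 2
      + min (2*s) (1 - 2*s) * ((x*y) ^ ((1:ℝ)/4) - Real.sqrt x) ^ 2
      ≤ (1 - s) * x + s * y := by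
  have hxy : (0:ℝ) < x * y := mul_pos hx hy
  have hz : 0 < Real.sqrt (x*y) := Real.sqrt_pos.mpr hxy
  have hkm := km x (Real.sqrt (x*y)) (2*s) hx hz (by linarith) (by linarith)
  have e1 : (Real.sqrt (x*y)) ^ (2*s : ℝ) = x ^ (s:ℝ) * y ^ (s:ℝ) := by
    rw [Real.sqrt_eq_rpow, ← Real.rpow_mul hxy.le]
    rw [show (1/2) * (2*s) = s by ring, Real.mul_rpow hx.le hy.le]
  have e2 : x ^ (1 - 2*s) * (x ^ (s:ℝ) * y ^ (s:ℝ)) = x ^ (1-s) * y ^ (s:ℝ) := by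
    rw [← mul_assoc, ← Real.rpow_add hx, show 1 - 2*s + s = 1 - s by ring]
  have e3 : Real.sqrt (Real.sqrt (x*y)) = (x*y) ^ ((1:ℝ)/4) := by
    rw [Real.sqrt_eq_rpow, Real.sqrt_eq_rpow, ← Real.rpow_mul hxy.le]
    norm_num
  rw [e1, e2, e3] at hkm
  have hsq : ((x*y) ^ ((1:ℝ)/4) - Real.sqrt x)^2 = (Real.sqrt x - (x*y) ^ ((1:ℝ)/4))^2 := by ring
  rw [hsq]
  have hs2 : Real.sqrt x * Real.sqrt y = Real.sqrt (x*y) := (Real.sqrt_mul hx.le y).symm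
  nlinarith [Real.sq_sqrt hx.le, Real.sq_sqrt hy.le]

/-- Zhao–Wu reverse of Young's inequality, case `0 < t ≤ 1/2`. -/
theorem zhao_wu_young_reverse (a b t : ℝ) (ha : 0 < a) (hb : 0 < b)
    (ht0 : 0 < t) (ht : t ≤ 1 / 2) :
    (1 - t) * a + t * b
      ≤ max t (1 - t) * (Real.sqrt a - Real.sqrt b) ^ 2
        - min (2 * t) (1 - 2 * t) * ((a * b) ^ ((1 : ℝ) / 4) - Real.sqrt b) ^ 2
        + a ^ (1 - t) * b ^ t := by
  rw [max_eq_right (by linarith : t ≤ 1 - t)]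
  have hfwd := fwd b a t hb ha ht0 ht
  rw [show b * a = a * b by ring] at hfwd
  -- AM-GM : 2√(ab) ≤ a^(1-t) b^t + a^t b^(1-t)
  have huv : (a ^ (1-t) * b ^ (t:ℝ)) * (a ^ (t:ℝ) * b ^ (1-t)) = a * b := by
    rw [mul_mul_mul_comm, ← Real.rpow_add ha, ← Real.rpow_add hb]
    norm_num
  have hu : (0:ℝ) < a ^ (1-t) * b ^ (t:ℝ) :=
    mul_pos (Real.rpow_pos_of_pos ha _) (Real.rpow_pos_of_pos hb _)
  have hv : (0:ℝ) < a ^ (t:ℝ) * b ^ (1-t) :=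
    mul_pos (Real.rpow_pos_of_pos ha _) (Real.rpow_pos_of_pos hb _)
  have hamgm : 2 * Real.sqrt (a*b) ≤ a ^ (1-t) * b ^ (t:ℝ) + a ^ (t:ℝ) * b ^ (1-t) := by
    have h1 : Real.sqrt (a*b) = Real.sqrt (a ^ (1-t) * b ^ (t:ℝ)) * Real.sqrt (a ^ (t:ℝ) * b ^ (1-t)) := by
      rw [← Real.sqrt_mul hu.le, huv]
    nlinarith [Real.sq_sqrt hu.le, Real.sq_sqrt hv.le,
      sq_nonneg (Real.sqrt (a ^ (1-t) * b ^ (t:ℝ)) - Real.sqrt (a ^ (t:ℝ) * b ^ (1-t)))]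
  have hab : a + b = (Real.sqrt a - Real.sqrt b)^2 + 2 * Real.sqrt (a*b) := by
    have hs2 : Real.sqrt a * Real.sqrt b = Real.sqrt (a*b) := (Real.sqrt_mul ha.le b).symm
    nlinarith [Real.sq_sqrt ha.le, Real.sq_sqrt hb.le]
  have hsq : (Real.sqrt b - Real.sqrt a)^2 = (Real.sqrt a - Real.sqrt b)^2 := by ring
  rw [hsq] at hfwd
  have hba : b ^ (1-t) * a ^ (t:ℝ) = a ^ (t:ℝ) * b ^ (1-t) := by ring
  rw [hba] at hfwd
  linarith
end

section
/- For positive real numbers a, b and 1/2 < t < 1, with r = min{t,1-t} = 1-t, R = max{t,1-t} = t, and r₀ = min{2(1-t), 2t-1}, one has r₀((ab)^{1/4} - √b)² + 2(1-t)((a+b)/2 - √(ab)) + a^{1-t} b^t ≤ (1-t)a + t b ≤ 2t((a+b)/2 - √(ab)) - r₀((ab)^{1/4} - √a)² + a^{1-t} b^t. -/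
set_option maxHeartbeats 1000000

/-- Weighted two-term AM-GM in exponent form. -/
lemma young2' {a b : ℝ} (ha : 0 < a) (hb : 0 < b) (w₁ w₂ p₁ q₁ p₂ q₂ : ℝ)
    (hw₁ : 0 ≤ w₁) (hw₂ : 0 ≤ w₂) (hw : w₁ + w₂ = 1) :
    a ^ (p₁ * w₁ + p₂ * w₂) * b ^ (q₁ * w₁ + q₂ * w₂)
      ≤ w₁ * (a ^ p₁ * b ^ q₁) + w₂ * (a ^ p₂ * b ^ q₂) := by
  have h := Real.geom_mean_le_arith_mean2_weighted hw₁ hw₂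
      (mul_nonneg (Real.rpow_nonneg ha.le p₁) (Real.rpow_nonneg hb.le q₁))
      (mul_nonneg (Real.rpow_nonneg ha.le p₂) (Real.rpow_nonneg hb.le q₂)) hw
  have key : (a ^ p₁ * b ^ q₁) ^ w₁ * (a ^ p₂ * b ^ q₂) ^ w₂
      = a ^ (p₁ * w₁ + p₂ * w₂) * b ^ (q₁ * w₁ + q₂ * w₂) := by
    rw [Real.mul_rpow (Real.rpow_nonneg ha.le _) (Real.rpow_nonneg hb.le _),
      Real.mul_rpow (Real.rpow_nonneg ha.le _) (Real.rpow_nonneg hb.le _),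
      ← Real.rpow_mul ha.le, ← Real.rpow_mul hb.le,
      ← Real.rpow_mul ha.le, ← Real.rpow_mul hb.le,
      Real.rpow_add ha, Real.rpow_add hb]
    ring
  rw [← key]
  exact h

/-- Weighted three-term AM-GM in exponent form. -/
lemma young3' {a b : ℝ} (ha : 0 < a) (hb : 0 < b) (w₁ w₂ w₃ p₁ q₁ p₂ q₂ p₃ q₃ : ℝ)
    (hw₁ : 0 ≤ w₁) (hw₂ : 0 ≤ w₂) (hw₃ : 0 ≤ w₃) (hw : w₁ + w₂ + w₃ = 1) :
    a ^ (p₁ * w₁ + p₂ * w₂ + p₃ * w₃) * b ^ (q₁ * w₁ + q₂ * w₂ + q₃ * w₃)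
      ≤ w₁ * (a ^ p₁ * b ^ q₁) + w₂ * (a ^ p₂ * b ^ q₂) + w₃ * (a ^ p₃ * b ^ q₃) := by
  have h := Real.geom_mean_le_arith_mean3_weighted hw₁ hw₂ hw₃
      (mul_nonneg (Real.rpow_nonneg ha.le p₁) (Real.rpow_nonneg hb.le q₁))
      (mul_nonneg (Real.rpow_nonneg ha.le p₂) (Real.rpow_nonneg hb.le q₂))
      (mul_nonneg (Real.rpow_nonneg ha.le p₃) (Real.rpow_nonneg hb.le q₃)) hw
  have key : (a ^ p₁ * b ^ q₁) ^ w₁ * (a ^ p₂ * b ^ q₂) ^ w₂ * (a ^ p₃ * b ^ q₃) ^ w₃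
      = a ^ (p₁ * w₁ + p₂ * w₂ + p₃ * w₃) * b ^ (q₁ * w₁ + q₂ * w₂ + q₃ * w₃) := by
    rw [Real.mul_rpow (Real.rpow_nonneg ha.le _) (Real.rpow_nonneg hb.le _),
      Real.mul_rpow (Real.rpow_nonneg ha.le _) (Real.rpow_nonneg hb.le _),
      Real.mul_rpow (Real.rpow_nonneg ha.le _) (Real.rpow_nonneg hb.le _),
      ← Real.rpow_mul ha.le, ← Real.rpow_mul hb.le,
      ← Real.rpow_mul ha.le, ← Real.rpow_mul hb.le,
      ← Real.rpow_mul ha.le, ← Real.rpow_mul hb.le,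
      Real.rpow_add ha, Real.rpow_add hb, Real.rpow_add ha, Real.rpow_add hb]
    ring
  rw [← key]
  exact h

/-- Zhao–Wu refinement and reverse of Young's inequality, case `1/2 < t < 1`. -/
theorem zhao_wu_young_half_lt (a b t : ℝ) (ha : 0 < a) (hb : 0 < b)
    (ht0 : 1 / 2 < t) (ht1 : t < 1) :
    min (2 * (1 - t)) (2 * t - 1) * ((a * b) ^ ((1 : ℝ) / 4) - Real.sqrt b) ^ 2
        + 2 * (1 - t) * ((a + b) / 2 - Real.sqrt (a * b)) + a ^ (1 - t) * b ^ t
      ≤ (1 - t) * a + t * b ∧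
    (1 - t) * a + t * b
      ≤ 2 * t * ((a + b) / 2 - Real.sqrt (a * b))
        - min (2 * (1 - t)) (2 * t - 1) * ((a * b) ^ ((1 : ℝ) / 4) - Real.sqrt a) ^ 2
        + a ^ (1 - t) * b ^ t := by
  set qa := a ^ ((1 : ℝ) / 4) with hqa_def
  set qb := b ^ ((1 : ℝ) / 4) with hqb_def
  have hqa : 0 < qa := Real.rpow_pos_of_pos ha _
  have hqb : 0 < qb := Real.rpow_pos_of_pos hb _
  have ea : qa ^ 4 = a := by
    rw [hqa_def, ← Real.rpow_natCast (a ^ ((1:ℝ)/4)) 4, ← Real.rpow_mul ha.le]; norm_num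
  have eb : qb ^ 4 = b := by
    rw [hqb_def, ← Real.rpow_natCast (b ^ ((1:ℝ)/4)) 4, ← Real.rpow_mul hb.le]; norm_num
  have ha2 : a ^ ((1:ℝ)/2) = qa ^ 2 := by
    rw [hqa_def, ← Real.rpow_natCast (a ^ ((1:ℝ)/4)) 2, ← Real.rpow_mul ha.le]; norm_num
  have hb2 : b ^ ((1:ℝ)/2) = qb ^ 2 := by
    rw [hqb_def, ← Real.rpow_natCast (b ^ ((1:ℝ)/4)) 2, ← Real.rpow_mul hb.le]; norm_num
  have ha3 : a ^ ((3:ℝ)/4) = qa ^ 3 := by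
    rw [hqa_def, ← Real.rpow_natCast (a ^ ((1:ℝ)/4)) 3, ← Real.rpow_mul ha.le]; norm_num
  have hb3 : b ^ ((3:ℝ)/4) = qb ^ 3 := by
    rw [hqb_def, ← Real.rpow_natCast (b ^ ((1:ℝ)/4)) 3, ← Real.rpow_mul hb.le]; norm_num
  have hsa : Real.sqrt a = qa ^ 2 := by rw [Real.sqrt_eq_rpow, ha2]
  have hsb : Real.sqrt b = qb ^ 2 := by rw [Real.sqrt_eq_rpow, hb2]
  have hsab : Real.sqrt (a * b) = qa ^ 2 * qb ^ 2 := by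
    rw [Real.sqrt_mul ha.le, hsa, hsb]
  have hqab : (a * b) ^ ((1:ℝ)/4) = qa * qb := Real.mul_rpow ha.le hb.le
  set G := a ^ (1 - t) * b ^ t with hG_def
  have hG : a ^ (1 - t) * b ^ t = G := rfl
  clear_value qa qb G
  rcases le_or_gt t (3/4) with hc | hc
  · -- r₀ = 2t - 1
    have hmin : min (2 * (1 - t)) (2 * t - 1) = 2 * t - 1 :=
      min_eq_right (by linarith)
    have F1 : G ≤ (3 - 4*t) * (qa^2 * qb^2) + (4*t - 2) * (qa * qb^3) := by
      have h := young2' ha hb (3 - 4*t) (4*t - 2) (1/2) (1/2) (1/4) (3/4)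
        (by linarith) (by linarith) (by ring)
      rw [show (1/2) * (3 - 4*t) + (1/4) * (4*t - 2) = 1 - t by ring,
          show (1/2) * (3 - 4*t) + (3/4) * (4*t - 2) = t by ring,
          ha2, hb2, ← hqa_def, hb3, hG] at h
      linarith [h]
    have h4t : (0:ℝ) < 4*t - 1 := by linarith
    have F3 : (4*t - 1) * (qa^2 * qb^2) ≤ G + (4*t - 2) * (qa^3 * qb) := by
      have h := young2' ha hb (1/(4*t-1)) ((4*t-2)/(4*t-1)) (1-t) t (3/4) (1/4)
        (one_div_nonneg.mpr (by linarith)) (div_nonneg (by linarith) (by linarith)) (by field_simp <;> ring)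
      rw [show (1-t) * (1/(4*t-1)) + (3/4) * ((4*t-2)/(4*t-1)) = 1/2 by
            rw [mul_one_div, mul_div_assoc', ← add_div, div_eq_iff h4t.ne']; ring,
          show t * (1/(4*t-1)) + (1/4) * ((4*t-2)/(4*t-1)) = 1/2 by
            rw [mul_one_div, mul_div_assoc', ← add_div, div_eq_iff h4t.ne']; ring,
          ha2, hb2, ha3, ← hqb_def, hG] at h
      have h2 := mul_le_mul_of_nonneg_left h h4t.le
      calc (4*t - 1) * (qa^2 * qb^2) = (4*t-1) * (qa^2 * qb^2) := rfl
        _ ≤ (4*t-1) * (1/(4*t-1) * G + (4*t-2)/(4*t-1) * (qa^3 * qb)) := h2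
        _ = G + (4*t - 2) * (qa^3 * qb) := by field_simp <;> ring
    constructor
    · rw [hmin, hsab, hqab, hsb, ← ea, ← eb]
      nlinarith [F1]
    · rw [hmin, hsab, hqab, hsa, ← ea, ← eb]
      nlinarith [F3]
  · -- r₀ = 2(1-t)
    have hmin : min (2 * (1 - t)) (2 * t - 1) = 2 * (1 - t) :=
      min_eq_left (by linarith)
    have F2 : G ≤ (4*t - 3) * b + (4 - 4*t) * (qa * qb^3) := by
      have h := young2' ha hb (4*t - 3) (4 - 4*t) 0 1 (1/4) (3/4)
        (by linarith) (by linarith) (by ring)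
      rw [show (0:ℝ) * (4*t - 3) + (1/4) * (4 - 4*t) = 1 - t by ring,
          show (1:ℝ) * (4*t - 3) + (3/4) * (4 - 4*t) = t by ring,
          Real.rpow_zero, Real.rpow_one, ← hqa_def, hb3, hG] at h
      linarith [h]
    have F4 : 2 * (qa^2 * qb^2) ≤ G + (4*t - 3) * qa^4 + (4 - 4*t) * (qa^3 * qb) := by
      have h := young3' ha hb (1/2) ((4*t-3)/2) (2 - 2*t) (1-t) t 1 0 (3/4) (1/4)
        (by norm_num) (by linarith) (by linarith) (by ring)
      rw [show (1-t) * (1/2) + 1 * ((4*t-3)/2) + (3/4) * (2 - 2*t) = 1/2 by ring,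
          show t * (1/2) + 0 * ((4*t-3)/2) + (1/4) * (2 - 2*t) = 1/2 by ring,
          Real.rpow_zero, Real.rpow_one, ha2, hb2, ha3, ← hqb_def, hG, ← ea] at h
      linarith [h]
    constructor
    · rw [hmin, hsab, hqab, hsb, ← ea]
      rw [show b = qb^4 from eb.symm]
      rw [show (4*t - 3) * b = (4*t-3) * qb^4 from by rw [← eb]] at F2
      nlinarith [F2]
    · rw [hmin, hsab, hqab, hsa, ← ea, ← eb]
      nlinarith [F4]
end

section
/- For positive real numbers k, s and 0 < t ≤ 1/2, with r = t, R = 1-t, and r₀ = min{2t, 1-2t}, one has r(k + s - 2√(ks)) + r₀(k^{1/2} s^{1/2} + k - 2 k^{3/4} s^{1/4}) ≤ (1-t)k + t s - k^{1-t} s^t ≤ R(k + s - 2√(ks)) - r₀(k^{1/2} s^{1/2} + s - 2 k^{1/4} s^{3/4}). -/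
open Real

lemma km_lower (a b μ : ℝ) (ha : 0 < a) (hb : 0 < b) (h0 : 0 ≤ μ) (h1 : μ ≤ 1) :
    min μ (1 - μ) * (Real.sqrt a - Real.sqrt b) ^ 2
      ≤ μ * a + (1 - μ) * b - a ^ μ * b ^ (1 - μ) := by
  have hab : (Real.sqrt a - Real.sqrt b) ^ 2 = a + b - 2 * Real.sqrt (a * b) := by
    rw [sub_sq, Real.sq_sqrt ha.le, Real.sq_sqrt hb.le, Real.sqrt_mul ha.le]
    ring
  have hsab : Real.sqrt (a * b) = (a*b) ^ ((1:ℝ)/2) := Real.sqrt_eq_rpow _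
  rcases le_or_gt μ (1/2) with hμ | hμ
  · have hmin : min μ (1 - μ) = μ := min_eq_left (by linarith)
    have amgm := Real.geom_mean_le_arith_mean2_weighted (w₁ := 2*μ) (w₂ := 1 - 2*μ)
      (p₁ := Real.sqrt (a*b)) (p₂ := b) (by linarith) (by linarith)
      (Real.sqrt_nonneg _) hb.le (by ring)
    have hgm : Real.sqrt (a*b) ^ (2*μ) * b ^ (1 - 2*μ) = a ^ μ * b ^ (1 - μ) := by
      rw [hsab, ← Real.rpow_mul (by positivity), Real.mul_rpow ha.le hb.le, mul_assoc,
        ← Real.rpow_add hb]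
      ring_nf
    rw [hgm] at amgm
    rw [hmin, hab]
    nlinarith [amgm]
  · have hmin : min μ (1 - μ) = 1 - μ := min_eq_right (by linarith)
    have amgm := Real.geom_mean_le_arith_mean2_weighted (w₁ := 2*μ - 1) (w₂ := 2 - 2*μ)
      (p₁ := a) (p₂ := Real.sqrt (a*b)) (by linarith) (by linarith)
      ha.le (Real.sqrt_nonneg _) (by ring)
    have hgm : a ^ (2*μ - 1) * Real.sqrt (a*b) ^ (2 - 2*μ) = a ^ μ * b ^ (1 - μ) := by
      rw [hsab, ← Real.rpow_mul (by positivity), Real.mul_rpow ha.le hb.le, ← mul_assoc,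
        ← Real.rpow_add ha]
      ring_nf
    rw [hgm] at amgm
    rw [hmin, hab]
    nlinarith [amgm]

lemma sq_diff_rpow_mono (z : ℝ) (hz : 0 < z) (α β : ℝ) (hβ : 0 ≤ β) (hαβ : β ≤ α) :
    (z ^ β - 1) ^ 2 ≤ (z ^ α - 1) ^ 2 := by
  rcases le_or_gt 1 z with h1 | h1
  · have h2 : z ^ β ≤ z ^ α := Real.rpow_le_rpow_of_exponent_le h1 hαβ
    have h3 : (1:ℝ) ≤ z ^ β := Real.one_le_rpow h1 hβ
    nlinarith
  · have h2 : z ^ α ≤ z ^ β := Real.rpow_le_rpow_of_exponent_ge hz h1.le hαβ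
    have h3 : z ^ β ≤ 1 := Real.rpow_le_one hz.le h1.le hβ
    nlinarith

/-- The scalar inequality underlying Theorem 2.7: refinement and reverse of Young's
inequality in the form used in the paper, for `0 < t ≤ 1/2`. -/
theorem scalar_refined_young (k s t : ℝ) (hk : 0 < k) (hs : 0 < s)
    (ht0 : 0 < t) (ht : t ≤ 1 / 2) :
    t * (k + s - 2 * Real.sqrt (k * s))
        + min (2 * t) (1 - 2 * t)
          * (k ^ ((1 : ℝ) / 2) * s ^ ((1 : ℝ) / 2) + k
              - 2 * k ^ ((3 : ℝ) / 4) * s ^ ((1 : ℝ) / 4))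
      ≤ (1 - t) * k + t * s - k ^ (1 - t) * s ^ t ∧
    (1 - t) * k + t * s - k ^ (1 - t) * s ^ t
      ≤ (1 - t) * (k + s - 2 * Real.sqrt (k * s))
        - min (2 * t) (1 - 2 * t)
          * (k ^ ((1 : ℝ) / 2) * s ^ ((1 : ℝ) / 2) + s
              - 2 * k ^ ((1 : ℝ) / 4) * s ^ ((3 : ℝ) / 4)) := by
  have hks : 0 < k * s := mul_pos hk hs
  have hsqrtks : Real.sqrt (k*s) = k ^ ((1:ℝ)/2) * s ^ ((1:ℝ)/2) := by
    rw [Real.sqrt_mul hk.le, Real.sqrt_eq_rpow, Real.sqrt_eq_rpow]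
  have hkr : ∀ x y : ℝ, k ^ x * k ^ y = k ^ (x+y) := fun x y => (Real.rpow_add hk x y).symm
  have hsr : ∀ x y : ℝ, s ^ x * s ^ y = s ^ (x+y) := fun x y => (Real.rpow_add hs x y).symm
  have hkp : ∀ x y : ℝ, (k ^ x) ^ y = k ^ (x*y) := fun x y => (Real.rpow_mul hk.le x y).symm
  have hsp : ∀ x y : ℝ, (s ^ x) ^ y = s ^ (x*y) := fun x y => (Real.rpow_mul hs.le x y).symm
  constructor
  · -- lower bound
    have hA : 0 < Real.sqrt (k*s) := Real.sqrt_pos.mpr hks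
    have km := km_lower (Real.sqrt (k*s)) k (2*t) hA hk (by linarith) (by linarith)
    have h14 : Real.sqrt (Real.sqrt (k*s)) = k ^ ((1:ℝ)/4) * s ^ ((1:ℝ)/4) := by
      rw [hsqrtks, Real.sqrt_eq_rpow, Real.mul_rpow (by positivity) (by positivity), hkp, hsp]
      norm_num
    have e2 : (Real.sqrt (Real.sqrt (k*s)) - Real.sqrt k)^2
        = k ^ ((1:ℝ)/2) * s ^ ((1:ℝ)/2) + k - 2 * k ^ ((3:ℝ)/4) * s ^ ((1:ℝ)/4) := by
      have hX2 : (Real.sqrt (Real.sqrt (k*s)))^2 = k ^ ((1:ℝ)/2) * s ^ ((1:ℝ)/2) := by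
        rw [Real.sq_sqrt (Real.sqrt_nonneg _), hsqrtks]
      have hXk : Real.sqrt (Real.sqrt (k*s)) * Real.sqrt k = k ^ ((3:ℝ)/4) * s ^ ((1:ℝ)/4) := by
        rw [h14, Real.sqrt_eq_rpow, mul_right_comm, hkr]
        norm_num
      have hk2 : (Real.sqrt k)^2 = k := Real.sq_sqrt hk.le
      rw [sub_sq, hX2, hk2, mul_assoc, hXk]; ring
    have e3 : Real.sqrt (k*s) ^ (2*t) * k ^ (1 - 2*t) = k ^ (1-t) * s ^ t := by
      rw [hsqrtks, Real.mul_rpow (by positivity) (by positivity), hkp, hsp,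
        mul_right_comm, hkr]
      rw [show (1/2*(2*t) + (1 - 2*t) : ℝ) = 1 - t by ring, show ((1:ℝ)/2*(2*t) : ℝ) = t by ring]
    rw [e2, e3] at km
    linarith [km]
  · -- upper bound
    set a := k ^ (1-t) * s ^ t with ha_def
    have ha : 0 < a := by positivity
    have hc : (0:ℝ) < 2 - 2*t := by linarith
    have hμ1 : 1/(2-2*t) ≤ 1 := by rw [div_le_one hc]; linarith
    have hμ0 : (0:ℝ) ≤ 1/(2-2*t) := by positivity
    have hμh : (1:ℝ)/2 ≤ 1/(2-2*t) := by
      rw [div_le_div_iff₀ (by norm_num) hc]; linarith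
    have km := km_lower a s (1/(2-2*t)) ha hs hμ0 hμ1
    have hmin : min (1/(2-2*t)) (1 - 1/(2-2*t)) = 1 - 1/(2-2*t) := min_eq_right (by linarith)
    have hGM : a ^ (1/(2-2*t)) * s ^ (1 - 1/(2-2*t)) = k ^ ((1:ℝ)/2) * s ^ ((1:ℝ)/2) := by
      rw [ha_def, Real.mul_rpow (by positivity) (by positivity), hkp, hsp, mul_assoc, hsr]
      have hx1 : ((1-t) * (1/(2-2*t)) : ℝ) = (1:ℝ)/2 := by
        linear_combination (1/2:ℝ) * mul_one_div_cancel hc.ne'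
      have hx2 : (t * (1/(2-2*t)) + (1 - 1/(2-2*t)) : ℝ) = (1:ℝ)/2 := by
        linear_combination (-1/2:ℝ) * mul_one_div_cancel hc.ne'
      rw [hx1, hx2]
    rw [hmin, hGM] at km
    have key : (1 - 2*t) * (Real.sqrt a - Real.sqrt s)^2
        ≤ a + (1-2*t)*s - (2-2*t)*(k ^ ((1:ℝ)/2) * s ^ ((1:ℝ)/2)) := by
      have h := mul_le_mul_of_nonneg_left km hc.le
      have h0 : (2-2*t) * (1/(2-2*t)) = 1 := mul_one_div_cancel hc.ne'
      have e1 : (2-2*t) * ((1 - 1/(2-2*t)) * (Real.sqrt a - Real.sqrt s)^2)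
          = (1-2*t) * (Real.sqrt a - Real.sqrt s)^2 := by
        linear_combination (-(Real.sqrt a - Real.sqrt s)^2) * h0
      have e2 : (2-2*t) * (1/(2-2*t) * a + (1 - 1/(2-2*t)) * s
            - k ^ ((1:ℝ)/2) * s ^ ((1:ℝ)/2))
          = a + (1-2*t)*s - (2-2*t)*(k ^ ((1:ℝ)/2) * s ^ ((1:ℝ)/2)) := by
        linear_combination (a - s) * h0
      rw [e1, e2] at h
      exact h
    -- comparison of remainder terms
    have hz : 0 < k/s := div_pos hk hs
    have hds : ∀ x:ℝ, s * (k/s)^x = k^x * s^(1-x) := by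
      intro x
      rw [Real.div_rpow hk.le hs.le, Real.rpow_sub hs, Real.rpow_one]
      field_simp
    have hmono := sq_diff_rpow_mono (k/s) hz ((1-t)/2) ((1:ℝ)/4) (by norm_num) (by linarith)
    have id1 : k ^ ((1:ℝ)/2) * s ^ ((1:ℝ)/2) + s - 2*(k^((1:ℝ)/4)*s^((3:ℝ)/4))
        = s * ((k/s)^((1:ℝ)/4) - 1)^2 := by
      have hq : ((k/s)^((1:ℝ)/4))^2 = (k/s)^((1:ℝ)/2) := by
        rw [← Real.rpow_natCast ((k/s)^((1:ℝ)/4)) 2, ← Real.rpow_mul hz.le]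
        norm_num
      have expand : s * ((k/s)^((1:ℝ)/4) - 1)^2
          = s*(k/s)^((1:ℝ)/2) - 2*(s*(k/s)^((1:ℝ)/4)) + s := by
        rw [sub_sq, hq]; ring
      rw [expand, hds, hds]
      norm_num
      ring
    have hsa : Real.sqrt a = k^((1-t)*(1/2)) * s^(t*(1/2)) := by
      rw [ha_def, Real.sqrt_eq_rpow, Real.mul_rpow (by positivity) (by positivity), hkp, hsp]
    have id2 : (Real.sqrt a - Real.sqrt s)^2 = s * ((k/s)^((1-t)/2) - 1)^2 := by
      have hq2 : ((k/s)^((1-t)/2))^2 = (k/s)^(1-t) := by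
        rw [← Real.rpow_natCast ((k/s)^((1-t)/2)) 2, ← Real.rpow_mul hz.le]
        norm_num
      have expand2 : s * ((k/s)^((1-t)/2) - 1)^2
          = s*(k/s)^(1-t) - 2*(s*(k/s)^((1-t)/2)) + s := by
        rw [sub_sq, hq2]; ring
      have hfix : k ^ ((1-t)*(1/2)) * s ^ (t*(1/2)) * s ^ ((1:ℝ)/2)
          = k ^ ((1-t)/2) * s ^ (1-(1-t)/2) := by
        rw [mul_assoc, hsr, show (t*(1/2) + (1:ℝ)/2 : ℝ) = 1-(1-t)/2 by ring,
          show ((1-t)*(1/2) : ℝ) = (1-t)/2 by ring]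
      rw [sub_sq, Real.sq_sqrt ha.le, Real.sq_sqrt hs.le, expand2, hds, hds, ha_def, hsa,
        Real.sqrt_eq_rpow]
      rw [show (1 - (1-t) : ℝ) = t by ring]
      rw [mul_assoc 2, hfix]
    have hcomp : k ^ ((1:ℝ)/2) * s ^ ((1:ℝ)/2) + s - 2*(k^((1:ℝ)/4)*s^((3:ℝ)/4))
        ≤ (Real.sqrt a - Real.sqrt s)^2 := by
      rw [id1, id2]
      exact mul_le_mul_of_nonneg_left hmono hs.le
    have hC0 : 0 ≤ k ^ ((1:ℝ)/2) * s ^ ((1:ℝ)/2) + s - 2*(k^((1:ℝ)/4)*s^((3:ℝ)/4)) := by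
      rw [id1]; positivity
    have hm2 : min (2*t) (1-2*t)
          * (k ^ ((1:ℝ)/2) * s ^ ((1:ℝ)/2) + s - 2*(k^((1:ℝ)/4)*s^((3:ℝ)/4)))
        ≤ (1-2*t) * (Real.sqrt a - Real.sqrt s)^2 :=
      mul_le_mul (min_le_right _ _) hcomp hC0 (by linarith)
    rw [hsqrtks] at *
    linarith [key, hm2]
end

section
/- Let A, B be positive definite n×n complex matrices (or positive invertible operators) and t ∈ (0, 1/2]. Then r₀(A♯B - 2(A♯_{1/4}B) + A) + 2t(A∇B - A♯B) + A♯_t B ≤ A∇_t B, where A♯_s B = A^{1/2}(A^{-1/2} B A^{-1/2})^s A^{1/2}, A∇_t B = (1-t)A + tB, A∇B = (A+B)/2, A♯B = A♯_{1/2}B, r = min{t,1-t}, r₀ = min{2r, 1-2r}. -/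
open scoped NNReal

section scalar

lemma scalar_young (u : ℝ) (hu : 0 ≤ u) (θ : ℝ) (h0 : 0 ≤ θ) (h1 : θ ≤ 1) :
    u ^ θ ≤ (1 - θ) + θ * u := by
  have h := Real.geom_mean_le_arith_mean2_weighted (sub_nonneg.2 h1) h0 zero_le_one hu
    (by ring)
  simpa using h

lemma scalar_zw (t : ℝ) (ht0 : 0 < t) (ht : t ≤ 1/2) (v : ℝ) (hv : 0 ≤ v) :
    min (2*t) (1-2*t) * (v^2 - 2*v + 1) + 2*t*((1+v^4)/2 - v^2) + v^(4*t)
      ≤ (1-t) + t*v^4 := by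
  rcases le_total (2*t) (1-2*t) with h | h
  · rw [min_eq_left h]
    have hy := scalar_young v hv (4*t) (by linarith) (by linarith)
    nlinarith [hy]
  · rw [min_eq_right h]
    have key : v ^ (4*t) ≤ (4*t-1)*v^2 + (2-4*t)*v := by
      have h1 : ((v^2) ^ (4*t-1)) * (v ^ (2-4*t)) ≤ (4*t-1)*v^2 + (2-4*t)*v :=
        Real.geom_mean_le_arith_mean2_weighted (by linarith) (by linarith)
          (sq_nonneg v) hv (by ring)
      refine le_trans (le_of_eq ?_) h1
      rw [← Real.rpow_natCast v 2, ← Real.rpow_mul hv, ← Real.rpow_add' hv (by intro hc; push_cast at hc; nlinarith)]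
      norm_num
      ring_nf
    nlinarith [key]

/-- The real function implementing `y ↦ y ^ s` compatible with the `ℝ≥0` functional calculus. -/
noncomputable def zwF (s : ℝ) : ℝ → ℝ := fun y => (y.toNNReal : ℝ) ^ s

lemma zwF_cont {s : ℝ} (hs : 0 < s) : Continuous (zwF s) := by
  unfold zwF
  exact (NNReal.continuous_coe.comp (NNReal.continuous_rpow_const hs.le)).comp
    continuous_real_toNNReal

lemma zwF_of_nonneg {s y : ℝ} (hy : 0 ≤ y) : zwF s y = y ^ s := by
  simp [zwF, Real.coe_toNNReal y hy]

end scalar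

variable {A : Type*} [CStarAlgebra A] [PartialOrder A] [StarOrderedRing A]

/-- The `s`-weighted geometric mean `a ♯ₛ b = a^{1/2} (a^{-1/2} b a^{-1/2})^s a^{1/2}`,
with real powers given by the continuous functional calculus. -/
noncomputable def geomMean (a b : A) (s : ℝ) : A :=
  a ^ ((1 : ℝ) / 2) * (a ^ (-(1 : ℝ) / 2) * b * a ^ (-(1 : ℝ) / 2)) ^ s * a ^ ((1 : ℝ) / 2)

/-- Zhao–Wu operator refinement of Young's inequality (Lemma 1.2(i)), `0 < t ≤ 1/2`. -/
theorem operator_zhao_wu_refinement (a b : A) (ha : 0 ≤ a) (ha' : IsUnit a)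
    (hb : 0 ≤ b) (hb' : IsUnit b) (t : ℝ) (ht0 : 0 < t) (ht : t ≤ 1 / 2) :
    min (2 * t) (1 - 2 * t) •
        (geomMean a b (1 / 2) - (2 : ℝ) • geomMean a b (1 / 4) + a)
      + (2 * t) • (((1 : ℝ) / 2) • (a + b) - geomMean a b (1 / 2))
      + geomMean a b t
      ≤ (1 - t) • a + t • b := by
  set c : A := a ^ ((1 : ℝ) / 2) with hc_def
  set ci : A := a ^ (-(1 : ℝ) / 2) with hci_def
  have hc : 0 ≤ c := CFC.rpow_nonneg
  have hci : 0 ≤ ci := CFC.rpow_nonneg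
  have hspec : (0 : ℝ≥0) ∉ spectrum ℝ≥0 a := spectrum.zero_notMem ℝ≥0 ha'
  have hneg : (-(1 : ℝ) / 2) = -((1 : ℝ)/2) := by norm_num
  have h1 : c * ci = 1 := by
    rw [hc_def, hci_def, hneg]; exact CFC.rpow_mul_rpow_neg _ (ha'.isStrictlyPositive ha)
  have h2 : ci * c = 1 := by
    rw [hc_def, hci_def, hneg]; exact CFC.rpow_neg_mul_rpow _ (ha'.isStrictlyPositive ha)
  have hcc : c * c = a := by
    rw [hc_def, ← CFC.rpow_add ha']
    norm_num
    exact CFC.rpow_one a ha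
  set x : A := ci * b * ci with hx_def
  have hx : 0 ≤ x := conjugate_nonneg_of_nonneg hb hci
  have hbx : c * x * c = b := by
    have : c * (ci * b * ci) * c = (c * ci) * b * (ci * c) := by
      simp only [mul_assoc]
    rw [hx_def, this, h1, h2, one_mul, mul_one]
  have hg : ∀ s : ℝ, geomMean a b s = c * x ^ s * c := fun s => rfl
  -- rpow as real cfc
  have hxs : ∀ s : ℝ, x ^ s = cfc (zwF s) x := by
    intro s
    rw [CFC.rpow_def, cfc_nnreal_eq_real _ _ hx]
    exact cfc_congr fun y _ => by simp [zwF]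
  have hxsa : IsSelfAdjoint x := IsSelfAdjoint.of_nonneg hx
  have c2 : Continuous (zwF (1/2)) := zwF_cont (by norm_num)
  have c4 : Continuous (zwF (1/4)) := zwF_cont (by norm_num)
  have ctt : Continuous (zwF t) := zwF_cont ht0
  have ce1 : Continuous (fun y : ℝ => zwF (1/2) y - 2 * zwF (1/4) y + 1) :=
    (c2.sub (continuous_const.mul c4)).add continuous_const
  have ce2 : Continuous (fun y : ℝ => 1/2 * (1 + y) - zwF (1/2) y) :=
    (continuous_const.mul (continuous_const.add continuous_id)).sub c2
  set r₀ : ℝ := min (2*t) (1-2*t) with hr₀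
  set gL : ℝ → ℝ := fun y =>
    r₀ * (zwF (1/2) y - 2 * zwF (1/4) y + 1)
      + 2*t*(1/2 * (1 + y) - zwF (1/2) y) + zwF t y with hgL
  set gR : ℝ → ℝ := fun y => (1-t) + t * y with hgR
  have hA : cfc (fun y : ℝ => zwF (1/2) y - 2 * zwF (1/4) y + 1) x
      = x ^ ((1:ℝ)/2) - (2:ℝ) • x ^ ((1:ℝ)/4) + 1 := by
    rw [cfc_add_const 1 (fun y : ℝ => zwF (1/2) y - 2 * zwF (1/4) y) x (c2.sub (continuous_const.mul c4)).continuousOn,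
      cfc_sub (zwF (1/2)) (fun y : ℝ => 2 * zwF (1/4) y) x c2.continuousOn (continuous_const.mul c4).continuousOn,
      cfc_const_mul 2 (zwF (1/4)) x c4.continuousOn, ← hxs, ← hxs, map_one]
  have hB : cfc (fun y : ℝ => 1/2 * (1 + y) - zwF (1/2) y) x
      = (1/2 : ℝ) • (1 + x) - x ^ ((1:ℝ)/2) := by
    rw [cfc_sub (fun y : ℝ => 1/2 * (1 + y)) (zwF (1/2)) x (by fun_prop) c2.continuousOn,
      cfc_const_mul (1/2) (fun y : ℝ => 1 + y) x (by fun_prop),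
      cfc_const_add 1 (fun y : ℝ => y) x (by fun_prop),
      cfc_id' (R := ℝ) (a := x) hxsa, map_one, ← hxs]
  have hL : cfc gL x
      = r₀ • (x ^ ((1:ℝ)/2) - (2:ℝ) • x ^ ((1:ℝ)/4) + 1)
        + (2*t) • ((1/2 : ℝ) • (1 + x) - x ^ ((1:ℝ)/2)) + x ^ t := by
    rw [hgL, cfc_add x (fun y : ℝ => r₀ * (zwF (1/2) y - 2 * zwF (1/4) y + 1) + 2*t*(1/2 * (1 + y) - zwF (1/2) y)) (zwF t) (((continuous_const.mul ce1).add (continuous_const.mul ce2)).continuousOn)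
        ctt.continuousOn,
      cfc_add x (fun y : ℝ => r₀ * (zwF (1/2) y - 2 * zwF (1/4) y + 1)) (fun y : ℝ => 2*t*(1/2 * (1 + y) - zwF (1/2) y)) ((continuous_const.mul ce1).continuousOn) ((continuous_const.mul ce2).continuousOn),
      cfc_const_mul r₀ _ x ce1.continuousOn, cfc_const_mul (2*t) _ x ce2.continuousOn,
      hA, hB, ← hxs]
  have hR : cfc gR x = (1-t) • 1 + t • x := by
    rw [hgR, cfc_const_add (1-t) (fun y : ℝ => t * y) x (by fun_prop),
      cfc_const_mul t (fun y : ℝ => y) x (by fun_prop),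
      cfc_id' (R := ℝ) (a := x) hxsa, Algebra.algebraMap_eq_smul_one]
  have hmono : cfc gL x ≤ cfc gR x := by
    refine cfc_mono (fun y hy => ?_)
      (((continuous_const.mul ce1).add (continuous_const.mul ce2)).add ctt).continuousOn
      (continuous_const.add (continuous_const.mul continuous_id)).continuousOn
    have hy0 : (0:ℝ) ≤ y := spectrum_nonneg_of_nonneg hx hy
    set v : ℝ := y ^ ((1:ℝ)/4) with hv_def
    have hv : 0 ≤ v := Real.rpow_nonneg hy0 _
    have h14 : zwF (1/4) y = v := zwF_of_nonneg hy0
    have h12 : zwF (1/2) y = v ^ 2 := by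
      rw [zwF_of_nonneg hy0, hv_def, ← Real.rpow_natCast (y ^ ((1:ℝ)/4)) 2,
        ← Real.rpow_mul hy0]
      norm_num
    have hyv : y = v ^ 4 := by
      rw [hv_def, ← Real.rpow_natCast (y ^ ((1:ℝ)/4)) 4, ← Real.rpow_mul hy0]
      norm_num
    have htv : zwF t y = v ^ (4*t) := by
      have hq : (1:ℝ)/4 * (4*t) = t := by ring
      rw [zwF_of_nonneg hy0, hv_def, ← Real.rpow_mul hy0, hq]
    have key := scalar_zw t ht0 ht v hv
    simp only [hgL, hgR, h14, h12, htv]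
    rw [hyv]
    nlinarith [key, hr₀]
  have hfin : c * cfc gL x * c ≤ c * cfc gR x * c :=
    conjugate_le_conjugate_of_nonneg hmono hc
  have hLHS : r₀ •
        (geomMean a b (1 / 2) - (2 : ℝ) • geomMean a b (1 / 4) + a)
      + (2 * t) • (((1 : ℝ) / 2) • (a + b) - geomMean a b (1 / 2))
      + geomMean a b t = c * cfc gL x * c := by
    rw [hL, hg, hg, hg, ← hcc, ← hbx]
    simp only [mul_add, add_mul, mul_sub, sub_mul, mul_smul_comm, smul_mul_assoc,
      mul_one, one_mul, mul_assoc]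
    try module
  have hRHS : (1 - t) • a + t • b = c * cfc gR x * c := by
    rw [hR, ← hcc, ← hbx]
    simp only [mul_add, add_mul, mul_smul_comm, smul_mul_assoc, mul_one, one_mul, mul_assoc]
    try module
  rw [hLHS, hRHS]
  exact hfin
end

section
/- Let A, B be positive definite matrices and t ∈ (0, 1/2]. Then A∇_t B ≤ A♯_t B + 2(1-t)(A∇B - A♯B) - r₀(A♯B - 2(A♯_{3/4}B) + B), where r = min{t,1-t} = t and r₀ = min{2t, 1-2t}. -/
open scoped NNReal

private lemma bern_aux {p x : ℝ} (hp : 1 ≤ p) (hx : 0 ≤ x) : 1 + p * (x - 1) ≤ x ^ p := by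
  have h := one_add_mul_self_le_rpow_one_add (by linarith : (-1:ℝ) ≤ x - 1) hp
  have : 1 + (x - 1) = x := by ring
  rwa [this] at h

private lemma caseA {t m : ℝ} (ht0 : 0 < t) (ht : t ≤ 1/4) (hm : 0 ≤ m) :
    2*m^2 - 4*t*m^3 - (1-4*t)*m^4 ≤ m ^ (4*t) := by
  rcases eq_or_lt_of_le hm with h | hm'
  · rw [← h, Real.zero_rpow (by positivity)]; norm_num
  have hmne : m ≠ 0 := ne_of_gt hm'
  have h1 : m ^ (4*t) = m ^ (4*t - 2) * m^2 := by
    rw [← Real.rpow_natCast m 2, ← Real.rpow_add hm']; norm_num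
  have h3 : m⁻¹ ^ (2 - 4*t) = m ^ (4*t - 2) := by
    rw [Real.inv_rpow hm, ← Real.rpow_neg hm]; ring_nf
  have h2 : 1 + (2 - 4*t) * (m⁻¹ - 1) ≤ m⁻¹ ^ (2 - 4*t) :=
    bern_aux (by linarith) (by positivity)
  have key : (2 - 4*t)*m + (4*t - 1)*m^2 ≤ m ^ (4*t) := by
    calc (2 - 4*t)*m + (4*t - 1)*m^2 = (1 + (2 - 4*t) * (m⁻¹ - 1)) * m^2 := by
          field_simp; ring
      _ ≤ m⁻¹ ^ (2 - 4*t) * m^2 := by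
          apply mul_le_mul_of_nonneg_right h2 (by positivity)
      _ = m ^ (4*t) := by rw [h3, ← h1]
  have hfac : 0 ≤ m * ((m-1)^2 * ((1-4*t)*m + (2-4*t))) := by
    apply mul_nonneg hm
    apply mul_nonneg (sq_nonneg _)
    nlinarith
  nlinarith [key, hfac]

private lemma caseB {t m : ℝ} (ht0 : 1/4 ≤ t) (ht : t ≤ 1/2) (hm : 0 ≤ m) :
    (3-4*t)*m^2 - (2-4*t)*m^3 ≤ m ^ (4*t) := by
  rcases eq_or_lt_of_le hm with h | hm'
  · rw [← h, Real.zero_rpow (by positivity)]; norm_num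
  have h1 : m ^ (4*t) = m ^ (4*t - 3) * m^3 := by
    rw [← Real.rpow_natCast m 3, ← Real.rpow_add hm']; norm_num
  have h3 : m⁻¹ ^ (3 - 4*t) = m ^ (4*t - 3) := by
    rw [Real.inv_rpow hm, ← Real.rpow_neg hm]; ring_nf
  have h2 : 1 + (3 - 4*t) * (m⁻¹ - 1) ≤ m⁻¹ ^ (3 - 4*t) :=
    bern_aux (by linarith) (by positivity)
  have hid : (1 + (3 - 4*t) * (m⁻¹ - 1)) * m^3 = (3-4*t)*m^2 - (2-4*t)*m^3 := by
    field_simp; ring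
  calc (3-4*t)*m^2 - (2-4*t)*m^3 = (1 + (3 - 4*t) * (m⁻¹ - 1)) * m^3 := hid.symm
    _ ≤ m⁻¹ ^ (3 - 4*t) * m^3 := mul_le_mul_of_nonneg_right h2 (by positivity)
    _ = m ^ (4*t) := by rw [h3, ← h1]

private lemma scalar_key {t m : ℝ} (ht0 : 0 < t) (ht : t ≤ 1/2) (hm : 0 ≤ m) :
    (1-t) + t*m^4 ≤ m ^ (4*t) + (2*(1-t)) * ((1:ℝ)/2 * (1 + m^4) - m^2)
      - min (2*t) (1-2*t) * (m^2 - 2*m^3 + m^4) := by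
  rcases le_total (2*t) (1-2*t) with h | h
  · rw [min_eq_left h]
    nlinarith [caseA ht0 (by linarith) hm]
  · rw [min_eq_right h]
    nlinarith [caseB (by linarith) ht hm]

private lemma scalar_nu {t : ℝ} (ht0 : 0 < t) (ht : t ≤ 1/2) {ν : ℝ} (hν : 0 ≤ ν) :
    0 ≤ ν ^ t + (2*(1-t)) * ((1:ℝ)/2 * (1 + ν) - ν ^ ((1:ℝ)/2))
      - min (2*t) (1-2*t) * (ν ^ ((1:ℝ)/2) - 2 * ν ^ ((3:ℝ)/4) + ν) - ((1-t) * 1 + t * ν) := by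
  set m : ℝ := ν ^ ((1:ℝ)/4) with hm_def
  have hm : 0 ≤ m := Real.rpow_nonneg hν _
  have epow : ∀ n : ℕ, m ^ n = ν ^ ((1:ℝ)/4 * n) := fun n => by
    rw [Real.rpow_mul hν, Real.rpow_natCast]
  have e2 : ν ^ ((1:ℝ)/2) = m ^ 2 := by rw [epow 2]; norm_num
  have e3 : ν ^ ((3:ℝ)/4) = m ^ 3 := by rw [epow 3]; norm_num
  have e4 : ν = m ^ 4 := by rw [epow 4]; norm_num
  have et : ν ^ t = m ^ (4*t) := by
    rw [hm_def, ← Real.rpow_mul hν]; congr 1; ring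
  rw [e2, e3, et, e4]
  linarith [scalar_key ht0 ht hm]


variable {A : Type*} [CStarAlgebra A] [PartialOrder A] [StarOrderedRing A]

/-- Zhao–Wu operator reverse Young inequality (Lemma 1.4(i)), `0 < t ≤ 1/2`. -/
theorem operator_zhao_wu_reverse (a b : A) (ha : 0 ≤ a) (ha' : IsUnit a)
    (hb : 0 ≤ b) (hb' : IsUnit b) (t : ℝ) (ht0 : 0 < t) (ht : t ≤ 1 / 2) :
    (1 - t) • a + t • b
      ≤ geomMean a b t
        + (2 * (1 - t)) • (((1 : ℝ) / 2) • (a + b) - geomMean a b (1 / 2))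
        - min (2 * t) (1 - 2 * t) •
            (geomMean a b (1 / 2) - (2 : ℝ) • geomMean a b (3 / 4) + b) := by
  have ha0 : (0:ℝ≥0) ∉ spectrum ℝ≥0 a := spectrum.zero_notMem ℝ≥0 ha'
  set u : A := a ^ ((1:ℝ)/2) with hu_def
  set v : A := a ^ (-(1:ℝ)/2) with hv_def
  have hu : (0:A) ≤ u := CFC.rpow_nonneg
  have hv : (0:A) ≤ v := CFC.rpow_nonneg
  have hneg : (-(1:ℝ)/2) = -((1:ℝ)/2) := by norm_num
  have huv : u * v = 1 := by
    rw [hu_def, hv_def, hneg]; exact CFC.rpow_mul_rpow_neg _ (IsStrictlyPositive.iff_of_unital.mpr ⟨ha, ha'⟩)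
  have hvu : v * u = 1 := by
    rw [hu_def, hv_def, hneg]; exact CFC.rpow_neg_mul_rpow _ (IsStrictlyPositive.iff_of_unital.mpr ⟨ha, ha'⟩)
  have huu : u * u = a := by
    rw [hu_def, ← CFC.rpow_add ha']
    norm_num
    exact CFC.rpow_one a ha
  set x : A := v * b * v with hx_def
  have hx : (0:A) ≤ x := conjugate_nonneg_of_nonneg hb hv
  have hb_eq : b = u * x * u := by
    rw [hx_def]
    calc b = (u * v) * b * (v * u) := by rw [huv, hvu, one_mul, mul_one]
      _ = u * (v * b * v) * u := by noncomm_ring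
  have ha_eq : a = u * 1 * u := by rw [mul_one, huu]
  have hgm : ∀ s : ℝ, geomMean a b s = u * x ^ s * u := fun s => rfl
  -- the scalar function
  set f : ℝ → ℝ := fun ν => ν ^ t + (2*(1-t)) * ((1:ℝ)/2 * (1 + ν) - ν ^ ((1:ℝ)/2))
      - min (2*t) (1-2*t) * (ν ^ ((1:ℝ)/2) - 2 * ν ^ ((3:ℝ)/4) + ν) - ((1-t) * 1 + t * ν)
    with hf_def
  have hsa : IsSelfAdjoint x := IsSelfAdjoint.of_nonneg hx
  have hpow : ∀ s : ℝ, x ^ s = cfc (fun ν : ℝ => ν ^ s) x := by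
    intro s
    rw [CFC.rpow_def, cfc_nnreal_eq_real _ _ hx]
    apply cfc_congr
    intro ν hν
    have hν' : 0 ≤ ν := spectrum_nonneg_of_nonneg hx hν
    simp [NNReal.coe_rpow, Real.coe_toNNReal ν hν']
  -- continuity facts
  have c_t : ContinuousOn (fun ν : ℝ => ν ^ t) (spectrum ℝ x) :=
    (Real.continuous_rpow_const ht0.le).continuousOn
  have c_half : ContinuousOn (fun ν : ℝ => ν ^ ((1:ℝ)/2)) (spectrum ℝ x) :=
    (Real.continuous_rpow_const (by norm_num)).continuousOn
  have c_34 : ContinuousOn (fun ν : ℝ => ν ^ ((3:ℝ)/4)) (spectrum ℝ x) :=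
    (Real.continuous_rpow_const (by norm_num)).continuousOn
  have c2 : ContinuousOn (fun ν : ℝ => (1:ℝ)/2 * (1 + ν) - ν ^ ((1:ℝ)/2)) (spectrum ℝ x) :=
    ((continuous_const.mul (continuous_const.add continuous_id)).continuousOn).sub c_half
  have c2' : ContinuousOn (fun ν : ℝ => (2*(1-t)) * ((1:ℝ)/2 * (1 + ν) - ν ^ ((1:ℝ)/2)))
      (spectrum ℝ x) := continuousOn_const.mul c2
  have c3 : ContinuousOn (fun ν : ℝ => ν ^ ((1:ℝ)/2) - 2 * ν ^ ((3:ℝ)/4) + ν) (spectrum ℝ x) :=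
    (c_half.sub (continuousOn_const.mul c_34)).add continuousOn_id
  have c3' : ContinuousOn
      (fun ν : ℝ => min (2*t) (1-2*t) * (ν ^ ((1:ℝ)/2) - 2 * ν ^ ((3:ℝ)/4) + ν))
      (spectrum ℝ x) := continuousOn_const.mul c3
  have c12 : ContinuousOn
      (fun ν : ℝ => ν ^ t + (2*(1-t)) * ((1:ℝ)/2 * (1 + ν) - ν ^ ((1:ℝ)/2))) (spectrum ℝ x) :=
    c_t.add c2'
  have c123 : ContinuousOn
      (fun ν : ℝ => ν ^ t + (2*(1-t)) * ((1:ℝ)/2 * (1 + ν) - ν ^ ((1:ℝ)/2))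
        - min (2*t) (1-2*t) * (ν ^ ((1:ℝ)/2) - 2 * ν ^ ((3:ℝ)/4) + ν)) (spectrum ℝ x) :=
    c12.sub c3'
  have c4 : ContinuousOn (fun ν : ℝ => (1-t) * 1 + t * ν) (spectrum ℝ x) :=
    (continuous_const.add (continuous_const.mul continuous_id)).continuousOn
  -- decompose the cfc
  have hcfc : cfc f x
      = x ^ t + (2*(1-t)) • (((1:ℝ)/2) • (1 + x) - x ^ ((1:ℝ)/2))
        - min (2*t) (1-2*t) • (x ^ ((1:ℝ)/2) - (2:ℝ) • x ^ ((3:ℝ)/4) + x)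
        - ((1-t) • (1:A) + t • x) := by
    rw [hf_def]
    rw [cfc_sub _ _ x c123 c4, cfc_sub _ _ x c12 c3', cfc_add x _ _ c_t c2',
      cfc_const_mul _ _ x c2, cfc_const_mul _ _ x c3,
      cfc_sub (fun ν : ℝ => (1:ℝ)/2 * (1 + ν)) (fun ν : ℝ => ν ^ ((1:ℝ)/2)) x
        (by fun_prop) c_half,
      cfc_const_mul ((1:ℝ)/2) (fun ν : ℝ => 1 + ν) x (by fun_prop),
      cfc_add x (fun ν : ℝ => ν ^ ((1:ℝ)/2) - 2 * ν ^ ((3:ℝ)/4)) (fun ν : ℝ => ν)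
        (c_half.sub (continuousOn_const.mul c_34)) continuousOn_id,
      cfc_sub (fun ν : ℝ => ν ^ ((1:ℝ)/2)) (fun ν : ℝ => 2 * ν ^ ((3:ℝ)/4)) x
        c_half (continuousOn_const.mul c_34),
      cfc_const_mul (2:ℝ) (fun ν : ℝ => ν ^ ((3:ℝ)/4)) x c_34,
      cfc_add x (fun _ : ℝ => (1-t) * 1) (fun ν : ℝ => t * ν) (by fun_prop) (by fun_prop),
      cfc_const_mul t (fun ν : ℝ => ν) x continuousOn_id,
      cfc_const_add (1:ℝ) (fun ν : ℝ => ν) x continuousOn_id hsa,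
      cfc_const ((1-t) * 1) x hsa, cfc_id' (R := ℝ) x hsa,
      ← hpow t, ← hpow ((1:ℝ)/2), ← hpow ((3:ℝ)/4)]
    simp [Algebra.algebraMap_eq_smul_one]
  rw [← sub_nonneg]
  have hmain : geomMean a b t
        + (2 * (1 - t)) • (((1 : ℝ) / 2) • (a + b) - geomMean a b (1 / 2))
        - min (2 * t) (1 - 2 * t) •
            (geomMean a b (1 / 2) - (2 : ℝ) • geomMean a b (3 / 4) + b)
        - ((1 - t) • a + t • b) = u * cfc f x * u := by
    rw [hcfc, hgm t, hgm (1/2 : ℝ), hgm (3/4 : ℝ), hb_eq, ha_eq]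
    simp only [mul_add, add_mul, mul_sub, sub_mul, mul_smul_comm, smul_mul_assoc,
      mul_one, one_mul, mul_assoc, smul_smul]
  rw [hmain]
  exact conjugate_nonneg_of_nonneg
    (cfc_nonneg fun ν hν => scalar_nu ht0 ht (spectrum_nonneg_of_nonneg hx hν)) hu
end

section
/- Let A, B be positive definite matrices and t ∈ (1/2, 1). Then r₀(A♯B - 2(A♯_{3/4}B) + B) + 2(1-t)(A∇B - A♯B) + A♯_t B ≤ A∇_t B ≤ A♯_t B + 2t(A∇B - A♯B) - r₀(A♯B - 2(A♯_{1/4}B) + A), where r = min{t,1-t} = 1-t and r₀ = min{2(1-t), 2t-1}. -/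
open scoped NNReal

section scalar

open Real

private lemma young_aux (u v w : ℝ) (hu : 0 ≤ u) (hv : 0 ≤ v) (h0 : 0 ≤ w) (hw : w ≤ 1 - w) :
    u ^ w * v ^ (1 - w) + w * (u ^ (1/2 : ℝ) - v ^ (1/2 : ℝ))^2 ≤ w * u + (1 - w) * v := by
  have hu2 : (0:ℝ) ≤ u ^ (1/2:ℝ) := rpow_nonneg hu _
  have hv2 : (0:ℝ) ≤ v ^ (1/2:ℝ) := rpow_nonneg hv _
  have key := Real.geom_mean_le_arith_mean2_weighted (w₁ := 2*w) (w₂ := 1 - 2*w)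
    (p₁ := u ^ (1/2:ℝ) * v ^ (1/2:ℝ)) (p₂ := v) (by linarith) (by linarith)
    (mul_nonneg hu2 hv2) hv (by ring)
  have h1a : (u ^ (1/2:ℝ) * v ^ (1/2:ℝ)) ^ (2*w) = u ^ w * v ^ w := by
    rw [Real.mul_rpow hu2 hv2, ← Real.rpow_mul hu, ← Real.rpow_mul hv,
      show (1/2) * (2*w) = w by ring]
  have h1b : v ^ w * v ^ (1 - 2*w) = v ^ (1 - w) := by
    rw [← Real.rpow_add' hv (by intro h; linarith [hw, h0]), show w + (1 - 2*w) = 1 - w by ring]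
  have husq : u ^ (1/2:ℝ) * u ^ (1/2:ℝ) = u := by
    rw [← Real.rpow_add' hu (by norm_num)]; norm_num
  have hvsq : v ^ (1/2:ℝ) * v ^ (1/2:ℝ) = v := by
    rw [← Real.rpow_add' hv (by norm_num)]; norm_num
  rw [h1a, mul_assoc, h1b] at key
  have hexp : (u ^ (1/2:ℝ) - v ^ (1/2:ℝ))^2
      = u + v - 2*(u ^ (1/2:ℝ) * v ^ (1/2:ℝ)) := by
    rw [sub_sq, sq, sq, husq, hvsq]; ring
  rw [hexp]
  ring_nf at key ⊢
  linarith

private lemma refined_young (u v l : ℝ) (hu : 0 ≤ u) (hv : 0 ≤ v) (h0 : 0 ≤ l) (h1 : l ≤ 1) :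
    u ^ l * v ^ (1 - l) + min l (1 - l) * (u ^ (1/2:ℝ) - v ^ (1/2:ℝ))^2 ≤ l * u + (1 - l) * v := by
  rcases le_total l (1 - l) with h | h
  · rw [min_eq_left h]; exact young_aux u v l hu hv h0 h
  · rw [min_eq_right h]
    have key := young_aux v u (1 - l) hv hu (by linarith) (by linarith)
    rw [show (1 : ℝ) - (1 - l) = l by ring] at key
    have e1 : v ^ (1 - l) * u ^ l = u ^ l * v ^ (1 - l) := mul_comm _ _
    have e2 : (v ^ (1/2:ℝ) - u ^ (1/2:ℝ))^2 = (u ^ (1/2:ℝ) - v ^ (1/2:ℝ))^2 := by ring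
    rw [e1, e2] at key
    linarith

private lemma scalar_lower (t x : ℝ) (ht0 : 1/2 < t) (ht1 : t < 1) (hx : 0 ≤ x) :
    min (2*(1-t)) (2*t-1) * (x ^ (1/2:ℝ) - 2 * x ^ (3/4:ℝ) + x)
      + 2*(1-t)*((1+x)/2 - x ^ (1/2:ℝ)) + x ^ t ≤ (1-t) + t*x := by
  have htne : t ≠ 0 := ne_of_gt (by linarith)
  rcases hx.eq_or_lt with rfl | hx'
  · rw [Real.zero_rpow (show (1/2:ℝ) ≠ 0 by norm_num),
      Real.zero_rpow (show (3/4:ℝ) ≠ 0 by norm_num), Real.zero_rpow htne]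
    norm_num
    linarith
  have key := refined_young x (x ^ (1/2:ℝ)) (2*t-1) hx (rpow_nonneg hx _)
    (by linarith) (by linarith)
  have e1 : (x ^ (1/2:ℝ)) ^ (1 - (2*t-1)) = x ^ (1-t) := by
    rw [← Real.rpow_mul hx]; congr 1; ring
  have e2 : x ^ (2*t-1) * x ^ (1-t) = x ^ t := by
    rw [← Real.rpow_add hx']; congr 1; ring
  have e3 : (x ^ (1/2:ℝ)) ^ (1/2:ℝ) = x ^ (1/4:ℝ) := by
    rw [← Real.rpow_mul hx]; norm_num
  have e4 : min (2*t-1) (1 - (2*t-1)) = min (2*(1-t)) (2*t-1) := by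
    rw [show (1 : ℝ) - (2*t-1) = 2*(1-t) by ring, min_comm]
  rw [e1, e2, e3, e4] at key
  have f1 : x ^ (1/2:ℝ) * x ^ (1/2:ℝ) = x := by
    rw [← Real.rpow_add hx']; norm_num
  have f2 : x ^ (1/2:ℝ) * x ^ (1/4:ℝ) = x ^ (3/4:ℝ) := by
    rw [← Real.rpow_add hx']; norm_num
  have f3 : x ^ (1/4:ℝ) * x ^ (1/4:ℝ) = x ^ (1/2:ℝ) := by
    rw [← Real.rpow_add hx']; norm_num
  have e5 : (x ^ (1/2:ℝ) - x ^ (1/4:ℝ))^2 = x - 2 * x ^ (3/4:ℝ) + x ^ (1/2:ℝ) := by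
    rw [sub_sq, sq, sq, f1, f3, mul_assoc, f2]
  rw [e5] at key
  ring_nf at key ⊢
  linarith

private lemma scalar_upper (t x : ℝ) (ht0 : 1/2 < t) (ht1 : t < 1) (hx : 0 ≤ x) :
    (1-t) + t*x ≤ x ^ t + 2*t*((1+x)/2 - x ^ (1/2:ℝ))
      - min (2*(1-t)) (2*t-1) * (x ^ (1/2:ℝ) - 2 * x ^ (1/4:ℝ) + 1) := by
  have htne : t ≠ 0 := ne_of_gt (by linarith)
  have hm2 : min (2*(1-t)) (2*t-1) ≤ 2*t-1 := min_le_right _ _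
  rcases hx.eq_or_lt with rfl | hx'
  · rw [Real.zero_rpow (show (1/2:ℝ) ≠ 0 by norm_num),
      Real.zero_rpow (show (1/4:ℝ) ≠ 0 by norm_num), Real.zero_rpow htne]
    norm_num
    linarith
  have ht' : (0:ℝ) < 2*t := by linarith
  have hxt : (0:ℝ) ≤ x ^ t := rpow_nonneg hx _
  have hl1 : 1/(2*t) ≤ 1 := by rw [div_le_one ht']; linarith
  have hl2 : (1:ℝ)/2 ≤ 1/(2*t) := by
    rw [div_le_div_iff₀ (by norm_num) ht']; linarith
  have key := refined_young (x ^ t) 1 (1/(2*t)) hxt zero_le_one (by positivity) hl1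
  have e1 : (x ^ t) ^ (1/(2*t)) = x ^ (1/2:ℝ) := by
    rw [← Real.rpow_mul hx, show t * (1/(2*t)) = 1/2 by field_simp]
  have e2 : (x ^ t) ^ (1/2:ℝ) = x ^ (t/2) := by
    rw [← Real.rpow_mul hx]; congr 1; ring
  have e3 : min (1/(2*t)) (1 - 1/(2*t)) = 1 - 1/(2*t) := min_eq_right (by linarith)
  rw [e1, e2, e3, Real.one_rpow, mul_one, Real.one_rpow] at key
  have key2 : 2*t*(x ^ (1/2:ℝ)) + (2*t-1)*(x ^ (t/2) - 1)^2 ≤ x ^ t + (2*t-1) := by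
    have hmul := mul_le_mul_of_nonneg_left key ht'.le
    have ha : 2*t*(1/(2*t) * x ^ t + (1 - 1/(2*t)) * 1) = x ^ t + (2*t - 1) := by
      field_simp
    have hb : 2*t*(x ^ (1/2:ℝ) + (1 - 1/(2*t)) * (x ^ (t/2) - 1)^2)
        = 2*t*(x ^ (1/2:ℝ)) + (2*t-1)*(x ^ (t/2) - 1)^2 := by
      field_simp
    rw [ha, hb] at hmul
    exact hmul
  have hcmp : (x ^ (1/4:ℝ) - 1)^2 ≤ (x ^ (t/2) - 1)^2 := by
    rcases le_total 1 x with h | h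
    · have h1 : x ^ (1/4:ℝ) ≤ x ^ (t/2) :=
        Real.rpow_le_rpow_of_exponent_le h (by linarith)
      have h2 : (1:ℝ) ≤ x ^ (1/4:ℝ) := Real.one_le_rpow h (by norm_num)
      nlinarith
    · have h1 : x ^ (t/2) ≤ x ^ (1/4:ℝ) :=
        Real.rpow_le_rpow_of_exponent_ge hx' h (by linarith)
      have h2 : x ^ (1/4:ℝ) ≤ 1 := Real.rpow_le_one hx h (by norm_num)
      have h3 : (0:ℝ) ≤ x ^ (t/2) := rpow_nonneg hx _
      nlinarith
  have f3 : x ^ (1/4:ℝ) * x ^ (1/4:ℝ) = x ^ (1/2:ℝ) := by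
    rw [← Real.rpow_add hx']; norm_num
  have e5 : x ^ (1/2:ℝ) - 2 * x ^ (1/4:ℝ) + 1 = (x ^ (1/4:ℝ) - 1)^2 := by
    rw [sub_sq, sq, sq, f3]; ring
  rw [e5]
  have hmm : min (2*(1-t)) (2*t-1) * (x ^ (1/4:ℝ) - 1)^2 ≤ (2*t-1)*(x ^ (t/2) - 1)^2 := by
    have g1 : min (2*(1-t)) (2*t-1) * (x ^ (1/4:ℝ) - 1)^2 ≤ (2*t-1) * (x ^ (1/4:ℝ) - 1)^2 :=
      mul_le_mul_of_nonneg_right hm2 (sq_nonneg _)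
    have g2 : (2*t-1) * (x ^ (1/4:ℝ) - 1)^2 ≤ (2*t-1)*(x ^ (t/2) - 1)^2 :=
      mul_le_mul_of_nonneg_left hcmp (by linarith)
    linarith
  linarith

end scalar

variable {A : Type*} [CStarAlgebra A] [PartialOrder A] [StarOrderedRing A]

private noncomputable def Fz (s : ℝ) : ℝ → ℝ := fun x => ((x.toNNReal ^ s : ℝ≥0) : ℝ)

private lemma Fz_cont {s : ℝ} (hs : 0 ≤ s) : Continuous (Fz s) :=
  NNReal.continuous_coe.comp ((NNReal.continuous_rpow_const hs).comp continuous_real_toNNReal)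

private lemma Fz_eq {s x : ℝ} (hx : 0 ≤ x) : Fz s x = x ^ s := by
  unfold Fz; rw [NNReal.coe_rpow, Real.coe_toNNReal x hx]

/-- Zhao–Wu operator refinement and reverse of Young's inequality, `1/2 < t < 1`. -/
theorem operator_zhao_wu_half_lt (a b : A) (ha : 0 ≤ a) (ha' : IsUnit a)
    (hb : 0 ≤ b) (hb' : IsUnit b) (t : ℝ) (ht0 : 1 / 2 < t) (ht1 : t < 1) :
    (min (2 * (1 - t)) (2 * t - 1) •
          (geomMean a b (1 / 2) - (2 : ℝ) • geomMean a b (3 / 4) + b)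
        + (2 * (1 - t)) • (((1 : ℝ) / 2) • (a + b) - geomMean a b (1 / 2))
        + geomMean a b t
      ≤ (1 - t) • a + t • b) ∧
    ((1 - t) • a + t • b
      ≤ geomMean a b t
        + (2 * t) • (((1 : ℝ) / 2) • (a + b) - geomMean a b (1 / 2))
        - min (2 * (1 - t)) (2 * t - 1) •
            (geomMean a b (1 / 2) - (2 : ℝ) • geomMean a b (1 / 4) + a)) := by
  have ht0' : (0:ℝ) < t := by linarith
  have hspec : (0:ℝ≥0) ∉ spectrum ℝ≥0 a := spectrum.zero_notMem ℝ≥0 ha'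
  set sq : A := a ^ ((1:ℝ)/2) with hsq
  set isq : A := a ^ (-(1:ℝ)/2) with hisq
  set c : A := isq * b * isq with hcdef
  have hsq0 : (0:A) ≤ sq := CFC.rpow_nonneg
  have hisq0 : (0:A) ≤ isq := CFC.rpow_nonneg
  have hsqsa : IsSelfAdjoint sq := .of_nonneg hsq0
  have hisqsa : IsSelfAdjoint isq := .of_nonneg hisq0
  have hmul1 : sq * isq = 1 := by
    rw [hsq, hisq, show (-(1:ℝ)/2) = -(1/2 : ℝ) by norm_num]
    exact CFC.rpow_mul_rpow_neg _ (ha'.isStrictlyPositive ha)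
  have hmul2 : isq * sq = 1 := by
    rw [hsq, hisq, show (-(1:ℝ)/2) = -(1/2 : ℝ) by norm_num]
    exact CFC.rpow_neg_mul_rpow _ (ha'.isStrictlyPositive ha)
  have hsqsq : sq * sq = a := by
    rw [hsq, ← CFC.rpow_add ha', show (1:ℝ)/2 + 1/2 = 1 by norm_num, CFC.rpow_one a ha]
  have hc0 : (0:A) ≤ c := by
    rw [hcdef]
    simpa [hisqsa.star_eq] using star_right_conjugate_nonneg hb isq
  have hcsa : IsSelfAdjoint c := .of_nonneg hc0
  have hcfc : ∀ s : ℝ, cfc (Fz s) c = c ^ s := by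
    intro s
    rw [CFC.rpow_def, cfc_nnreal_eq_real _ _ hc0]
    rfl
  have hgeom : ∀ s : ℝ, geomMean a b s = sq * cfc (Fz s) c * sq := by
    intro s
    rw [hcfc, geomMean, ← hsq, ← hisq, ← hcdef]
  have hT1 : sq * cfc (Fz 1) c * sq = b := by
    rw [hcfc, CFC.rpow_one c hc0, hcdef,
      show sq * (isq * b * isq) * sq = (sq * isq) * (b * (isq * sq)) by
        simp only [mul_assoc],
      hmul1, hmul2, one_mul, mul_one]
  have hT0 : sq * cfc (Fz 0) c * sq = a := by
    rw [hcfc, CFC.rpow_zero c hc0, mul_one, hsqsq]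
  have machine : ∀ f g : ℝ → ℝ, Continuous f → Continuous g →
      (∀ x ∈ spectrum ℝ c, f x ≤ g x) → sq * cfc f c * sq ≤ sq * cfc g c * sq := by
    intro f g hf hg hfg
    exact IsSelfAdjoint.conjugate_le_conjugate
      (cfc_mono hfg hf.continuousOn hg.continuousOn) hsqsa
  -- continuity facts
  have c12 : Continuous (Fz (1/2)) := Fz_cont (by norm_num)
  have c34 : Continuous (Fz (3/4)) := Fz_cont (by norm_num)
  have c14 : Continuous (Fz (1/4)) := Fz_cont (by norm_num)
  have c1 : Continuous (Fz 1) := Fz_cont zero_le_one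
  have c0 : Continuous (Fz 0) := Fz_cont le_rfl
  have ct : Continuous (Fz t) := Fz_cont ht0'.le
  have cP : Continuous (fun x => Fz (1/2) x - 2 * Fz (3/4) x + Fz 1 x) :=
    (c12.sub (continuous_const.mul c34)).add c1
  have cP' : Continuous (fun x => Fz (1/2) x - 2 * Fz (1/4) x + Fz 0 x) :=
    (c12.sub (continuous_const.mul c14)).add c0
  have cQ : Continuous (fun x => 1/2 * (Fz 0 x + Fz 1 x) - Fz (1/2) x) :=
    (continuous_const.mul (c0.add c1)).sub c12
  have cL : Continuous (fun x => min (2*(1-t)) (2*t-1) * (Fz (1/2) x - 2 * Fz (3/4) x + Fz 1 x)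
      + (2*(1-t)) * (1/2 * (Fz 0 x + Fz 1 x) - Fz (1/2) x) + Fz t x) :=
    ((continuous_const.mul cP).add (continuous_const.mul cQ)).add ct
  have cR : Continuous (fun x => (1-t) * Fz 0 x + t * Fz 1 x) :=
    (continuous_const.mul c0).add (continuous_const.mul c1)
  have cU : Continuous (fun x => Fz t x + (2*t) * (1/2 * (Fz 0 x + Fz 1 x) - Fz (1/2) x)
      - min (2*(1-t)) (2*t-1) * (Fz (1/2) x - 2 * Fz (1/4) x + Fz 0 x)) :=
    (ct.add (continuous_const.mul cQ)).sub (continuous_const.mul cP')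
  -- decompositions
  have dL : cfc (fun x => min (2*(1-t)) (2*t-1) * (Fz (1/2) x - 2 * Fz (3/4) x + Fz 1 x)
        + (2*(1-t)) * (1/2 * (Fz 0 x + Fz 1 x) - Fz (1/2) x) + Fz t x) c
      = min (2*(1-t)) (2*t-1) • (cfc (Fz (1/2)) c - (2:ℝ) • cfc (Fz (3/4)) c + cfc (Fz 1) c)
        + (2*(1-t)) • ((1/2:ℝ) • (cfc (Fz 0) c + cfc (Fz 1) c) - cfc (Fz (1/2)) c)
        + cfc (Fz t) c := by
    rw [cfc_add c _ _ ((continuous_const.fun_mul cP).fun_add (continuous_const.fun_mul cQ)).continuousOn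
        ct.continuousOn,
      cfc_add c _ _ (continuous_const.fun_mul cP).continuousOn (continuous_const.fun_mul cQ).continuousOn,
      cfc_const_mul _ _ c cP.continuousOn, cfc_const_mul _ _ c cQ.continuousOn,
      cfc_add c _ _ (c12.fun_sub (continuous_const.fun_mul c34)).continuousOn c1.continuousOn,
      cfc_sub _ _ c c12.continuousOn (continuous_const.fun_mul c34).continuousOn,
      cfc_const_mul _ _ c c34.continuousOn,
      cfc_sub _ _ c (continuous_const.fun_mul (c0.fun_add c1)).continuousOn c12.continuousOn,
      cfc_const_mul _ _ c (c0.fun_add c1).continuousOn,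
      cfc_add c _ _ c0.continuousOn c1.continuousOn]
  have dR : cfc (fun x => (1-t) * Fz 0 x + t * Fz 1 x) c
      = (1-t) • cfc (Fz 0) c + t • cfc (Fz 1) c := by
    rw [cfc_add c _ _ (continuous_const.fun_mul c0).continuousOn (continuous_const.fun_mul c1).continuousOn,
      cfc_const_mul _ _ c c0.continuousOn, cfc_const_mul _ _ c c1.continuousOn]
  have dU : cfc (fun x => Fz t x + (2*t) * (1/2 * (Fz 0 x + Fz 1 x) - Fz (1/2) x)
        - min (2*(1-t)) (2*t-1) * (Fz (1/2) x - 2 * Fz (1/4) x + Fz 0 x)) c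
      = cfc (Fz t) c + (2*t) • ((1/2:ℝ) • (cfc (Fz 0) c + cfc (Fz 1) c) - cfc (Fz (1/2)) c)
        - min (2*(1-t)) (2*t-1) • (cfc (Fz (1/2)) c - (2:ℝ) • cfc (Fz (1/4)) c + cfc (Fz 0) c) := by
    rw [cfc_sub _ _ c (ct.fun_add (continuous_const.fun_mul cQ)).continuousOn
        (continuous_const.fun_mul cP').continuousOn,
      cfc_add c _ _ ct.continuousOn (continuous_const.fun_mul cQ).continuousOn,
      cfc_const_mul _ _ c cQ.continuousOn,
      cfc_const_mul _ _ c cP'.continuousOn,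
      cfc_add c _ _ (c12.fun_sub (continuous_const.fun_mul c14)).continuousOn c0.continuousOn,
      cfc_sub _ _ c c12.continuousOn (continuous_const.fun_mul c14).continuousOn,
      cfc_const_mul _ _ c c14.continuousOn,
      cfc_sub _ _ c (continuous_const.fun_mul (c0.fun_add c1)).continuousOn c12.continuousOn,
      cfc_const_mul _ _ c (c0.fun_add c1).continuousOn,
      cfc_add c _ _ c0.continuousOn c1.continuousOn]
  -- pointwise inequalities
  have hsp : ∀ x ∈ spectrum ℝ c, (0:ℝ) ≤ x := fun x hx => spectrum_nonneg_of_nonneg hc0 hx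
  have hfLR : ∀ x ∈ spectrum ℝ c,
      (fun x => min (2*(1-t)) (2*t-1) * (Fz (1/2) x - 2 * Fz (3/4) x + Fz 1 x)
        + (2*(1-t)) * (1/2 * (Fz 0 x + Fz 1 x) - Fz (1/2) x) + Fz t x) x
      ≤ (fun x => (1-t) * Fz 0 x + t * Fz 1 x) x := by
    intro x hx
    have hx0 := hsp x hx
    simp only [Fz_eq hx0, Real.rpow_one, Real.rpow_zero]
    have := scalar_lower t x ht0 ht1 hx0
    ring_nf at this ⊢
    linarith
  have hfRU : ∀ x ∈ spectrum ℝ c,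
      (fun x => (1-t) * Fz 0 x + t * Fz 1 x) x
      ≤ (fun x => Fz t x + (2*t) * (1/2 * (Fz 0 x + Fz 1 x) - Fz (1/2) x)
        - min (2*(1-t)) (2*t-1) * (Fz (1/2) x - 2 * Fz (1/4) x + Fz 0 x)) x := by
    intro x hx
    have hx0 := hsp x hx
    simp only [Fz_eq hx0, Real.rpow_one, Real.rpow_zero]
    have := scalar_upper t x ht0 ht1 hx0
    ring_nf at this ⊢
    linarith
  have hineq1 := machine _ _ cL cR hfLR
  have hineq2 := machine _ _ cR cU hfRU
  rw [dL, dR] at hineq1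
  rw [dR, dU] at hineq2
  -- now rewrite goal in terms of cfc pieces
  rw [hgeom (1/2), hgeom (3/4), hgeom (1/4), hgeom t] at *
  constructor
  · refine le_trans (le_of_eq ?_) (le_trans hineq1 (le_of_eq ?_)) <;>
    · rw [← hT1, ← hT0]
      simp only [mul_add, add_mul, mul_sub, sub_mul, mul_smul_comm, smul_mul_assoc,
        smul_add, smul_sub, mul_assoc]
  · refine le_trans (le_of_eq ?_) (le_trans hineq2 (le_of_eq ?_)) <;>
    · rw [← hT1, ← hT0]
      simp only [mul_add, add_mul, mul_sub, sub_mul, mul_smul_comm, smul_mul_assoc,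
        smul_add, smul_sub, mul_assoc]
end

section
/- Let A₁,...,Aₙ and B₁,...,Bₙ be positive invertible operators and t ∈ [0,1]. Then Σᵢ Aᵢ♯_t Bᵢ ≤ (Σᵢ Aᵢ)♯_t(Σᵢ Bᵢ). -/
open scoped NNReal
open Finset

variable {A : Type*} [CStarAlgebra A] [PartialOrder A] [StarOrderedRing A]

open scoped ENNReal
open CFC

set_option linter.unusedSectionVars false
set_option linter.unusedVariables false
set_option maxHeartbeats 1000000

lemma zns {a : A} (ha' : IsUnit a) : 0 ∉ spectrum ℝ≥0 a := spectrum.zero_notMem_iff ℝ≥0 |>.mpr ha'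

lemma rpow_isUnit {a : A} (ha : 0 ≤ a) (ha' : IsUnit a) (r : ℝ) : IsUnit (a ^ r) :=
  ⟨⟨a ^ r, a ^ (-r), CFC.rpow_mul_rpow_neg r (ha'.isStrictlyPositive ha),
    CFC.rpow_neg_mul_rpow r (ha'.isStrictlyPositive ha)⟩, rfl⟩

lemma rpow_mul_rpow {a : A} (ha : 0 ≤ a) (ha' : IsUnit a) (r s : ℝ) : a ^ r * a ^ s = a ^ (r + s) :=
  (CFC.rpow_add ha').symm

lemma mul_rpow_neg_one {a : A} (ha : 0 ≤ a) (ha' : IsUnit a) : a * a ^ (-1:ℝ) = 1 := by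
  have := CFC.rpow_mul_rpow_neg (1:ℝ) (ha'.isStrictlyPositive ha)
  rwa [CFC.rpow_one a ha] at this

lemma rpow_neg_one_mul {a : A} (ha : 0 ≤ a) (ha' : IsUnit a) : a ^ (-1:ℝ) * a = 1 := by
  have := CFC.rpow_neg_mul_rpow (1:ℝ) (ha'.isStrictlyPositive ha)
  rwa [CFC.rpow_one a ha] at this

lemma half_cancel {a : A} (ha : 0 ≤ a) (ha' : IsUnit a) : a ^ ((1:ℝ)/2) * a ^ (-(1:ℝ)/2) = 1 := by
  rw [rpow_mul_rpow ha ha']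
  norm_num
  exact CFC.rpow_zero a ha

lemma neg_half_cancel {a : A} (ha : 0 ≤ a) (ha' : IsUnit a) :
    a ^ (-(1:ℝ)/2) * a ^ ((1:ℝ)/2) = 1 := by
  rw [rpow_mul_rpow ha ha']
  norm_num
  exact CFC.rpow_zero a ha

lemma c_nonneg {a b : A} (hb : 0 ≤ b) : (0:A) ≤ a ^ (-(1:ℝ)/2) * b * a ^ (-(1:ℝ)/2) :=
  conjugate_nonneg_of_nonneg hb CFC.rpow_nonneg

lemma c_isUnit {a b : A} (ha : 0 ≤ a) (ha' : IsUnit a) (hb' : IsUnit b) :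
    IsUnit (a ^ (-(1:ℝ)/2) * b * a ^ (-(1:ℝ)/2)) :=
  ((rpow_isUnit ha ha' _).mul hb').mul (rpow_isUnit ha ha' _)

lemma geomMean_nonneg {a b : A} (ha : 0 ≤ a) (ha' : IsUnit a) (hb : 0 ≤ b) (hb' : IsUnit b)
    (s : ℝ) : 0 ≤ geomMean a b s := by
  set c : A := a ^ (-(1:ℝ)/2) * b * a ^ (-(1:ℝ)/2)
  have hc : (0:A) ≤ c := c_nonneg hb
  have h2 : c ^ (s/2) * c ^ (s/2) = c ^ s := by
    rw [rpow_mul_rpow hc (c_isUnit ha ha' hb')]; norm_num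
  have : geomMean a b s = star (c ^ (s/2) * a ^ ((1:ℝ)/2)) * (c ^ (s/2) * a ^ ((1:ℝ)/2)) := by
    rw [star_mul, (IsSelfAdjoint.of_nonneg (CFC.rpow_nonneg (a := c))).star_eq,
      (IsSelfAdjoint.of_nonneg (CFC.rpow_nonneg (a := a))).star_eq, geomMean, ← h2]
    noncomm_ring
  rw [this]
  exact star_mul_self_nonneg _

lemma geomMean_isUnit {a b : A} (ha : 0 ≤ a) (ha' : IsUnit a) (hb : 0 ≤ b) (hb' : IsUnit b)
    (s : ℝ) : IsUnit (geomMean a b s) :=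
  ((rpow_isUnit ha ha' _).mul (rpow_isUnit (c_nonneg hb) (c_isUnit ha ha' hb') s)).mul
    (rpow_isUnit ha ha' _)

lemma geomMean_zero {a b : A} (ha : 0 ≤ a) (ha' : IsUnit a) (hb : 0 ≤ b) :
    geomMean a b 0 = a := by
  rw [geomMean, CFC.rpow_zero _ (c_nonneg hb), mul_one, rpow_mul_rpow ha ha']
  norm_num
  exact CFC.rpow_one a ha

lemma geomMean_one {a b : A} (ha : 0 ≤ a) (ha' : IsUnit a) (hb : 0 ≤ b) :
    geomMean a b 1 = b := by
  rw [geomMean, CFC.rpow_one _ (c_nonneg hb)]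
  calc a ^ ((1:ℝ)/2) * (a ^ (-(1:ℝ)/2) * b * a ^ (-(1:ℝ)/2)) * a ^ ((1:ℝ)/2)
      = (a ^ ((1:ℝ)/2) * a ^ (-(1:ℝ)/2)) * b * (a ^ (-(1:ℝ)/2) * a ^ ((1:ℝ)/2)) := by
        noncomm_ring
    _ = b := by rw [half_cancel ha ha', neg_half_cancel ha ha', one_mul, mul_one]

lemma rpow_neg_one_unique {x y : A} (hx : 0 ≤ x) (hx' : IsUnit x) (h1 : y * x = 1) :
    x ^ (-1:ℝ) = y := by
  calc x ^ (-1:ℝ) = 1 * x ^ (-1:ℝ) := (one_mul _).symm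
    _ = y * (x * x ^ (-1:ℝ)) := by rw [← h1]; noncomm_ring
    _ = y := by rw [mul_rpow_neg_one hx hx', mul_one]

lemma geomMean_inv {a b : A} (ha : 0 ≤ a) (ha' : IsUnit a) (hb : 0 ≤ b) (hb' : IsUnit b) (s : ℝ) :
    (geomMean a b s) ^ (-1:ℝ) =
      a ^ (-(1:ℝ)/2) * (a ^ (-(1:ℝ)/2) * b * a ^ (-(1:ℝ)/2)) ^ (-s) * a ^ (-(1:ℝ)/2) := by
  set c : A := a ^ (-(1:ℝ)/2) * b * a ^ (-(1:ℝ)/2) with hcdef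
  have hc : (0:A) ≤ c := c_nonneg hb
  have hc' : IsUnit c := c_isUnit ha ha' hb'
  refine rpow_neg_one_unique (geomMean_nonneg ha ha' hb hb' s) (geomMean_isUnit ha ha' hb hb' s) ?_
  have hcc : c ^ (-s) * c ^ s = 1 := by
    rw [rpow_mul_rpow hc hc']; norm_num; exact CFC.rpow_zero c hc
  calc a ^ (-(1:ℝ)/2) * c ^ (-s) * a ^ (-(1:ℝ)/2) * geomMean a b s
      = a ^ (-(1:ℝ)/2) * c ^ (-s) * (a ^ (-(1:ℝ)/2) * a ^ ((1:ℝ)/2)) * c ^ s * a ^ ((1:ℝ)/2) := by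
        rw [geomMean, ← hcdef]; noncomm_ring
    _ = a ^ (-(1:ℝ)/2) * (c ^ (-s) * c ^ s) * a ^ ((1:ℝ)/2) := by
        rw [neg_half_cancel ha ha', mul_one]; noncomm_ring
    _ = 1 := by rw [hcc, mul_one, neg_half_cancel ha ha']

lemma geomMean_conj {a b : A} (ha : 0 ≤ a) (ha' : IsUnit a) (hb : 0 ≤ b) (hb' : IsUnit b)
    (m s : ℝ) :
    geomMean a b m * (geomMean a b s) ^ (-1:ℝ) * geomMean a b m = geomMean a b (2*m - s) := by
  set c : A := a ^ (-(1:ℝ)/2) * b * a ^ (-(1:ℝ)/2) with hcdef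
  have hc : (0:A) ≤ c := c_nonneg hb
  have hc' : IsUnit c := c_isUnit ha ha' hb'
  rw [geomMean_inv ha ha' hb hb' s]
  calc geomMean a b m * (a ^ (-(1:ℝ)/2) * c ^ (-s) * a ^ (-(1:ℝ)/2)) * geomMean a b m
      = a ^ ((1:ℝ)/2) * (c ^ m * ((a ^ ((1:ℝ)/2) * a ^ (-(1:ℝ)/2)) * c ^ (-s) *
          (a ^ (-(1:ℝ)/2) * a ^ ((1:ℝ)/2))) * c ^ m) * a ^ ((1:ℝ)/2) := by
        rw [geomMean, ← hcdef]; noncomm_ring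
    _ = a ^ ((1:ℝ)/2) * (c ^ m * c ^ (-s) * c ^ m) * a ^ ((1:ℝ)/2) := by
        rw [half_cancel ha ha', neg_half_cancel ha ha', one_mul, mul_one]
    _ = geomMean a b (2*m - s) := by
        rw [rpow_mul_rpow hc hc', rpow_mul_rpow hc hc', geomMean, ← hcdef,
          show m + -s + m = 2*m - s by ring]

lemma spectralRadius_mul_comm (x y : A) :
    spectralRadius ℂ (x * y) = spectralRadius ℂ (y * x) := by
  have key : ∀ u v : A, spectralRadius ℂ (u * v) ≤ spectralRadius ℂ (v * u) := by
    intro u v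
    rw [spectralRadius, spectralRadius]
    refine iSup₂_le fun k hk => ?_
    rcases eq_or_ne k 0 with rfl | hk0
    · simp
    · have : k ∈ spectrum ℂ (v * u) \ {0} := by
        rw [← spectrum.nonzero_mul_comm]
        exact ⟨hk, hk0⟩
      exact le_iSup₂ (f := fun k (_ : k ∈ spectrum ℂ (v * u)) => (‖k‖₊ : ℝ≥0∞)) k this.1
  exact le_antisymm (key x y) (key y x)

lemma sqrt_le_sqrt' {a b : A} (ha : 0 ≤ a) (hab : a ≤ b) (hb' : IsUnit b) :
    CFC.sqrt a ≤ CFC.sqrt b := by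
  nontriviality A
  have hb : 0 ≤ b := ha.trans hab
  have hsb : (0:A) ≤ CFC.sqrt b := CFC.sqrt_nonneg b
  have hsbu : IsUnit (CFC.sqrt b) := by
    rw [CFC.sqrt_eq_rpow]; exact rpow_isUnit hb hb' _
  rw [le_iff_norm_sqrt_mul_rpow (CFC.sqrt a) (CFC.sqrt b) (CFC.sqrt_nonneg _) (hsbu.isStrictlyPositive hsb)]
  have hq : (CFC.sqrt b) ^ (-(1/2) : ℝ) = b ^ (-(1/4) : ℝ) := by
    rw [CFC.sqrt_eq_rpow, CFC.rpow_rpow b _ _ (by norm_num) (hb'.isStrictlyPositive hb)]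
    norm_num
  rw [hq]
  set q : A := b ^ (-(1/4) : ℝ) with hqdef
  set m : A := CFC.sqrt (CFC.sqrt a) * q with hm
  have hqsa : IsSelfAdjoint q := IsSelfAdjoint.of_nonneg CFC.rpow_nonneg
  have hssa : IsSelfAdjoint (CFC.sqrt (CFC.sqrt a)) := IsSelfAdjoint.of_nonneg (CFC.sqrt_nonneg _)
  have hstar : star m * m = q * CFC.sqrt a * q := by
    rw [hm, star_mul, hqsa.star_eq, hssa.star_eq]
    calc q * CFC.sqrt (CFC.sqrt a) * (CFC.sqrt (CFC.sqrt a) * q)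
        = q * (CFC.sqrt (CFC.sqrt a) * CFC.sqrt (CFC.sqrt a)) * q := by noncomm_ring
      _ = q * CFC.sqrt a * q := by rw [CFC.sqrt_mul_sqrt_self (CFC.sqrt a) (CFC.sqrt_nonneg _)]
  -- spectral radius argument
  have h1 : (‖q * CFC.sqrt a * q‖₊ : ℝ≥0∞) = spectralRadius ℂ (q * CFC.sqrt a * q) :=
    (IsSelfAdjoint.spectralRadius_eq_nnnorm
      (IsSelfAdjoint.of_nonneg
        (conjugate_nonneg_of_nonneg (CFC.sqrt_nonneg (a := a)) (CFC.rpow_nonneg (a := b))))).symm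
  have h2 : spectralRadius ℂ (q * CFC.sqrt a * q) = spectralRadius ℂ (CFC.sqrt a * (q * q)) := by
    calc spectralRadius ℂ (q * CFC.sqrt a * q)
        = spectralRadius ℂ ((q * CFC.sqrt a) * q) := rfl
      _ = spectralRadius ℂ (q * (q * CFC.sqrt a)) := spectralRadius_mul_comm (q * CFC.sqrt a) q
      _ = spectralRadius ℂ ((q * q) * CFC.sqrt a) := by rw [← mul_assoc]
      _ = spectralRadius ℂ (CFC.sqrt a * (q * q)) := spectralRadius_mul_comm (q * q) (CFC.sqrt a)
  have hqq : q * q = b ^ (-(1/2) : ℝ) := by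
    rw [hqdef, rpow_mul_rpow hb hb']; norm_num
  have h3 : spectralRadius ℂ (CFC.sqrt a * (q * q)) ≤ ‖CFC.sqrt a * (q * q)‖₊ :=
    spectrum.spectralRadius_le_nnnorm (𝕜 := ℂ) _
  have h4 : ‖CFC.sqrt a * (q * q)‖ ≤ 1 := by
    rw [hqq]
    exact (le_iff_norm_sqrt_mul_rpow a b ha (hb'.isStrictlyPositive hb)).mp hab
  -- put it together
  have hmn : ‖m‖₊ ^ 2 ≤ 1 := by
    have : ‖star m * m‖₊ = ‖m‖₊ ^ 2 := by rw [CStarRing.nnnorm_star_mul_self, sq]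
    rw [← this, hstar]
    have h123 := (h1.trans h2).trans_le h3
    have h4' : ‖CFC.sqrt a * (q * q)‖₊ ≤ 1 := by
      rwa [← NNReal.coe_le_coe, coe_nnnorm, NNReal.coe_one]
    have : ‖q * CFC.sqrt a * q‖₊ ≤ ‖CFC.sqrt a * (q * q)‖₊ := by exact_mod_cast h123
    exact this.trans h4'
  have : ‖m‖₊ ≤ 1 := by
    have h := hmn
    rw [← one_pow 2] at h
    exact pow_le_pow_iff_left₀ zero_le zero_le (by norm_num) |>.mp h
  exact_mod_cast this

lemma le_geomMean_half {a b x : A} (ha : 0 ≤ a) (ha' : IsUnit a) (hb : 0 ≤ b) (hb' : IsUnit b)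
    (hx : 0 ≤ x) (h : x * a ^ (-1:ℝ) * x ≤ b) : x ≤ geomMean a b ((1:ℝ)/2) := by
  set c : A := a ^ (-(1:ℝ)/2) * b * a ^ (-(1:ℝ)/2) with hcdef
  have hc : (0:A) ≤ c := c_nonneg hb
  have hc' : IsUnit c := c_isUnit ha ha' hb'
  set y : A := a ^ (-(1:ℝ)/2) * x * a ^ (-(1:ℝ)/2) with hydef
  have hy : (0:A) ≤ y := conjugate_nonneg_of_nonneg hx CFC.rpow_nonneg
  have hmid : a ^ (-(1:ℝ)/2) * a ^ (-(1:ℝ)/2) = a ^ (-1:ℝ) := by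
    rw [rpow_mul_rpow ha ha']; norm_num
  have hyy : y * y = a ^ (-(1:ℝ)/2) * (x * a ^ (-1:ℝ) * x) * a ^ (-(1:ℝ)/2) := by
    calc y * y = a ^ (-(1:ℝ)/2) * x * (a ^ (-(1:ℝ)/2) * a ^ (-(1:ℝ)/2)) * x * a ^ (-(1:ℝ)/2) := by
          rw [hydef]; noncomm_ring
      _ = _ := by rw [hmid]; noncomm_ring
  have hyyc : y * y ≤ c := by
    rw [hyy, hcdef]
    exact conjugate_le_conjugate_of_nonneg h CFC.rpow_nonneg
  have hyle : y ≤ c ^ ((1:ℝ)/2) := by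
    have hyy0 : (0:A) ≤ y * y := by
      have h0 := star_mul_self_nonneg y
      rwa [(IsSelfAdjoint.of_nonneg hy).star_eq] at h0
    have h2 := sqrt_le_sqrt' hyy0 hyyc hc'
    rwa [CFC.sqrt_mul_self y hy, CFC.sqrt_eq_rpow] at h2
  have h3 : a ^ ((1:ℝ)/2) * y * a ^ ((1:ℝ)/2) ≤ a ^ ((1:ℝ)/2) * c ^ ((1:ℝ)/2) * a ^ ((1:ℝ)/2) :=
    conjugate_le_conjugate_of_nonneg hyle CFC.rpow_nonneg
  have h4 : a ^ ((1:ℝ)/2) * y * a ^ ((1:ℝ)/2) = x := by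
    calc a ^ ((1:ℝ)/2) * y * a ^ ((1:ℝ)/2)
        = (a ^ ((1:ℝ)/2) * a ^ (-(1:ℝ)/2)) * x * (a ^ (-(1:ℝ)/2) * a ^ ((1:ℝ)/2)) := by
          rw [hydef]; noncomm_ring
      _ = x := by rw [half_cancel ha ha', neg_half_cancel ha ha', one_mul, mul_one]
  rw [h4] at h3
  exact h3

lemma eq_geomMean_half {a b x : A} (ha : 0 ≤ a) (ha' : IsUnit a) (hb : 0 ≤ b) (hb' : IsUnit b)
    (hx : 0 ≤ x) (h : x * a ^ (-1:ℝ) * x = b) : x = geomMean a b ((1:ℝ)/2) := by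
  set c : A := a ^ (-(1:ℝ)/2) * b * a ^ (-(1:ℝ)/2) with hcdef
  have hc : (0:A) ≤ c := c_nonneg hb
  set y : A := a ^ (-(1:ℝ)/2) * x * a ^ (-(1:ℝ)/2) with hydef
  have hy : (0:A) ≤ y := conjugate_nonneg_of_nonneg hx CFC.rpow_nonneg
  have hmid : a ^ (-(1:ℝ)/2) * a ^ (-(1:ℝ)/2) = a ^ (-1:ℝ) := by
    rw [rpow_mul_rpow ha ha']; norm_num
  have hyy : y * y = c := by
    calc y * y = a ^ (-(1:ℝ)/2) * x * (a ^ (-(1:ℝ)/2) * a ^ (-(1:ℝ)/2)) * x * a ^ (-(1:ℝ)/2) := by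
          rw [hydef]; noncomm_ring
      _ = a ^ (-(1:ℝ)/2) * (x * a ^ (-1:ℝ) * x) * a ^ (-(1:ℝ)/2) := by rw [hmid]; noncomm_ring
      _ = c := by rw [h, hcdef]
  have hsqrt : c ^ ((1:ℝ)/2) = y := by
    rw [← CFC.sqrt_eq_rpow]
    exact CFC.sqrt_unique hyy hy
  calc x = (a ^ ((1:ℝ)/2) * a ^ (-(1:ℝ)/2)) * x * (a ^ (-(1:ℝ)/2) * a ^ ((1:ℝ)/2)) := by
        rw [half_cancel ha ha', neg_half_cancel ha ha', one_mul, mul_one]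
    _ = a ^ ((1:ℝ)/2) * y * a ^ ((1:ℝ)/2) := by rw [hydef]; noncomm_ring
    _ = geomMean a b ((1:ℝ)/2) := by rw [geomMean, ← hcdef, hsqrt]

lemma geomMean_geomMean {a b : A} (ha : 0 ≤ a) (ha' : IsUnit a) (hb : 0 ≤ b) (hb' : IsUnit b)
    (s u : ℝ) :
    geomMean (geomMean a b s) (geomMean a b u) ((1:ℝ)/2) = geomMean a b ((s+u)/2) := by
  refine (eq_geomMean_half (geomMean_nonneg ha ha' hb hb' s) (geomMean_isUnit ha ha' hb hb' s)
    (geomMean_nonneg ha ha' hb hb' u) (geomMean_isUnit ha ha' hb hb' u)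
    (geomMean_nonneg ha ha' hb hb' ((s+u)/2)) ?_).symm
  rw [geomMean_conj ha ha' hb hb' ((s+u)/2) s, show 2*((s+u)/2) - s = u by ring]

lemma conj_expand (X S B : A) (hB : 0 ≤ B) (hB' : IsUnit B) :
    (X - star S * B) * B ^ (-1:ℝ) * (X - B * S) + (X * S + star S * X) =
      X * B ^ (-1:ℝ) * X + star S * B * S := by
  have h1 : B ^ (-1:ℝ) * B = 1 := rpow_neg_one_mul hB hB'
  have h2 : B * B ^ (-1:ℝ) = 1 := mul_rpow_neg_one hB hB'
  calc (X - star S * B) * B ^ (-1:ℝ) * (X - B * S) + (X * S + star S * X)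
      = X * B ^ (-1:ℝ) * X - X * ((B ^ (-1:ℝ) * B) * S) - star S * ((B * B ^ (-1:ℝ)) * X) +
          star S * ((B * B ^ (-1:ℝ)) * (B * S)) + (X * S + star S * X) := by noncomm_ring
    _ = X * B ^ (-1:ℝ) * X + star S * B * S := by rw [h1, h2]; noncomm_ring

lemma sum_conj_le {n : ℕ} (x g : Fin n → A) (hx : ∀ i, 0 ≤ x i)
    (hg : ∀ i, 0 ≤ g i) (hg' : ∀ i, IsUnit (g i)) (hG' : IsUnit (∑ i, g i)) :
    (∑ i, x i) * (∑ i, g i) ^ (-1:ℝ) * (∑ i, x i) ≤ ∑ i, x i * (g i) ^ (-1:ℝ) * x i := by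
  set G : A := ∑ i, g i with hGdef
  set X : A := ∑ i, x i with hXdef
  have hG : (0:A) ≤ G := Finset.sum_nonneg fun i _ => hg i
  have hXsa : IsSelfAdjoint X := IsSelfAdjoint.of_nonneg (Finset.sum_nonneg fun i _ => hx i)
  set S : A := G ^ (-1:ℝ) * X with hSdef
  set z : Fin n → A := fun i => (g i) ^ (-(1:ℝ)/2) * (x i - g i * S) with hzdef
  have hSstar : star S = X * G ^ (-1:ℝ) := by
    rw [hSdef, star_mul, hXsa.star_eq, (IsSelfAdjoint.of_nonneg (CFC.rpow_nonneg (a := G))).star_eq]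
  have hQ : star S * G * S = X * G ^ (-1:ℝ) * X := by
    calc star S * G * S = X * G ^ (-1:ℝ) * G * (G ^ (-1:ℝ) * X) := by rw [hSstar, hSdef]
      _ = X * ((G ^ (-1:ℝ) * G) * G ^ (-1:ℝ)) * X := by noncomm_ring
      _ = X * G ^ (-1:ℝ) * X := by rw [rpow_neg_one_mul hG hG', one_mul]
  have hterm : ∀ i, star (z i) * z i + (x i * S + star S * x i) =
      x i * (g i) ^ (-1:ℝ) * x i + star S * g i * S := by
    intro i
    have hmid : (g i) ^ (-(1:ℝ)/2) * (g i) ^ (-(1:ℝ)/2) = (g i) ^ (-1:ℝ) := by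
      rw [rpow_mul_rpow (hg i) (hg' i)]; norm_num
    have hz : star (z i) * z i =
        (x i - star S * g i) * ((g i) ^ (-(1:ℝ)/2) * (g i) ^ (-(1:ℝ)/2)) * (x i - g i * S) := by
      rw [hzdef]
      rw [star_mul, star_sub, star_mul, (IsSelfAdjoint.of_nonneg (hx i)).star_eq,
        (IsSelfAdjoint.of_nonneg (hg i)).star_eq,
        (IsSelfAdjoint.of_nonneg (CFC.rpow_nonneg (a := g i))).star_eq]
      noncomm_ring
    rw [hz, hmid]
    exact conj_expand (x i) S (g i) (hg i) (hg' i)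
  have hsum : (∑ i, star (z i) * z i) + (X * S + star S * X) =
      (∑ i, x i * (g i) ^ (-1:ℝ) * x i) + star S * G * S := by
    calc (∑ i, star (z i) * z i) + (X * S + star S * X)
        = ∑ i, (star (z i) * z i + (x i * S + star S * x i)) := by
          rw [Finset.sum_add_distrib, Finset.sum_add_distrib, hXdef, Finset.sum_mul,
            Finset.mul_sum]
      _ = ∑ i, (x i * (g i) ^ (-1:ℝ) * x i + star S * g i * S) :=
          Finset.sum_congr rfl fun i _ => hterm i
      _ = (∑ i, x i * (g i) ^ (-1:ℝ) * x i) + star S * G * S := by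
          rw [Finset.sum_add_distrib, hGdef, Finset.mul_sum, Finset.sum_mul]
  have hXS : X * S = X * G ^ (-1:ℝ) * X := by rw [hSdef, mul_assoc]
  have hSX : star S * X = X * G ^ (-1:ℝ) * X := by rw [hSstar]
  rw [hXS, hSX, hQ] at hsum
  have hcancel : (∑ i, star (z i) * z i) + X * G ^ (-1:ℝ) * X =
      ∑ i, x i * (g i) ^ (-1:ℝ) * x i := by
    have h' : ((∑ i, star (z i) * z i) + X * G ^ (-1:ℝ) * X) + X * G ^ (-1:ℝ) * X =
        (∑ i, x i * (g i) ^ (-1:ℝ) * x i) + X * G ^ (-1:ℝ) * X := by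
      rw [← hsum]; abel
    exact add_right_cancel h'
  have h0 : (0:A) ≤ ∑ i, star (z i) * z i := Finset.sum_nonneg fun i _ => star_mul_self_nonneg _
  calc X * G ^ (-1:ℝ) * X ≤ (∑ i, star (z i) * z i) + X * G ^ (-1:ℝ) * X :=
        le_add_of_nonneg_left h0
    _ = ∑ i, x i * (g i) ^ (-1:ℝ) * x i := hcancel

lemma rpow_eq_exp_smul_log {c : A} (hc : 0 ≤ c) (hc' : IsUnit c) (t : ℝ) :
    c ^ t = NormedSpace.exp (t • CFC.log c) := by
  have hsp : ∀ r ∈ spectrum ℝ c, 0 < r := by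
    intro r hr
    have h1 : 0 ≤ r := spectrum_nonneg_of_nonneg hc hr
    have h2 : r ≠ 0 := by
      rintro rfl
      exact (spectrum.zero_notMem_iff ℝ |>.mpr hc') hr
    exact lt_of_le_of_ne h1 (Ne.symm h2)
  have step1 : c ^ t = cfc (fun x : ℝ => ((x.toNNReal : ℝ≥0) ^ t : ℝ≥0) : ℝ → ℝ) c := by
    rw [CFC.rpow_def, cfc_nnreal_eq_real _ c hc]
  have step2 : cfc (fun x : ℝ => ((x.toNNReal : ℝ≥0) ^ t : ℝ≥0) : ℝ → ℝ) c =
      cfc (fun x : ℝ => Real.exp (t • Real.log x)) c := by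
    refine cfc_congr fun r hr => ?_
    have hrpos := hsp r hr
    have : ((r.toNNReal : ℝ≥0) ^ t : ℝ≥0) = (r : ℝ) ^ t := by
      rw [NNReal.coe_rpow, Real.coe_toNNReal r hrpos.le]
    rw [this, Real.rpow_def_of_pos hrpos]
    simp [smul_eq_mul, mul_comm]
  have step3 : cfc (fun x : ℝ => Real.exp (t • Real.log x)) c =
      cfc Real.exp (cfc (fun x : ℝ => t • Real.log x) c) := by
    exact cfc_comp Real.exp (fun x : ℝ => t • Real.log x) c
      (IsSelfAdjoint.of_nonneg hc)
      (Real.continuous_exp.continuousOn)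
      (ContinuousOn.const_smul (Real.continuousOn_log.mono (by
        intro r hr
        exact Set.mem_compl_singleton_iff.mpr (hsp r hr).ne')) t)

  have hlogcont : ContinuousOn Real.log (spectrum ℝ c) :=
    Real.continuousOn_log.mono (by
      intro r hr
      exact Set.mem_compl_singleton_iff.mpr (hsp r hr).ne')
  have step4 : cfc (fun x : ℝ => t • Real.log x) c = t • CFC.log c := by
    rw [CFC.log, cfc_smul t Real.log c hlogcont]
  rw [step1, step2, step3, step4]
  exact real_exp_eq_normedSpace_exp
    (IsSelfAdjoint.smul (IsSelfAdjoint.all t) (IsSelfAdjoint.log (a := c)))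

lemma continuous_rpow_exponent {c : A} (hc : 0 ≤ c) (hc' : IsUnit c) :
    Continuous (fun t : ℝ => c ^ t) := by
  have : (fun t : ℝ => c ^ t) = fun t : ℝ => NormedSpace.exp (t • CFC.log c) := by
    funext t; exact rpow_eq_exp_smul_log hc hc' t
  rw [this]
  exact (show Continuous (NormedSpace.exp : A → A) by
    rw [← continuousOn_univ, ← Metric.eball_top_eq_univ (0 : A),
      ← NormedSpace.expSeries_radius_eq_top ℝ A]
    exact NormedSpace.continuousOn_exp (𝕂 := ℝ)).comp (continuous_id.smul continuous_const)

lemma sum_isUnit {n : ℕ} (hn : 0 < n) (f : Fin n → A) (h0 : ∀ i, 0 ≤ f i)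
    (h1 : ∀ i, IsUnit (f i)) : IsUnit (∑ i, f i) :=
  CStarAlgebra.isUnit_of_le _
    (Finset.single_le_sum (fun i _ => h0 i) (Finset.mem_univ ⟨0, hn⟩)) ((h1 _).isStrictlyPositive (h0 _))

/-- The operator Hölder inequality: superadditivity of the weighted geometric mean. -/
theorem operator_holder (n : ℕ) (a b : Fin n → A)
    (ha : ∀ i, 0 ≤ a i) (ha' : ∀ i, IsUnit (a i))
    (hb : ∀ i, 0 ≤ b i) (hb' : ∀ i, IsUnit (b i))
    (t : ℝ) (ht0 : 0 ≤ t) (ht1 : t ≤ 1) :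
    ∑ i, geomMean (a i) (b i) t ≤ geomMean (∑ i, a i) (∑ i, b i) t := by
  rcases Nat.eq_zero_or_pos n with rfl | hn
  · simp only [Finset.univ_eq_empty, Finset.sum_empty]
    rw [geomMean]
    rw [show ((0:A) ^ ((1:ℝ)/2)) = 0 from CFC.zero_rpow (by norm_num)]
    simp
  set SA : A := ∑ i, a i with hSAdef
  set SB : A := ∑ i, b i with hSBdef
  have hSA : 0 ≤ SA := Finset.sum_nonneg fun i _ => ha i
  have hSB : 0 ≤ SB := Finset.sum_nonneg fun i _ => hb i
  have hSA' : IsUnit SA := sum_isUnit hn a ha ha'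
  have hSB' : IsUnit SB := sum_isUnit hn b hb hb'
  set Sgood : Set ℝ := {s : ℝ | (∑ i, geomMean (a i) (b i) s) ≤ geomMean SA SB s} with hSgood
  have h0 : (0:ℝ) ∈ Sgood := by
    simp only [hSgood, Set.mem_setOf_eq]
    rw [geomMean_zero hSA hSA' hSB]
    exact le_of_eq (Finset.sum_congr rfl fun i _ => geomMean_zero (ha i) (ha' i) (hb i))
  have h1 : (1:ℝ) ∈ Sgood := by
    simp only [hSgood, Set.mem_setOf_eq]
    rw [geomMean_one hSA hSA' hSB]
    exact le_of_eq (Finset.sum_congr rfl fun i _ => geomMean_one (ha i) (ha' i) (hb i))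
  have hmid : ∀ s u : ℝ, s ∈ Sgood → u ∈ Sgood → (s+u)/2 ∈ Sgood := by
    intro s u hs hu
    simp only [hSgood, Set.mem_setOf_eq] at hs hu ⊢
    set x : A := ∑ i, geomMean (a i) (b i) ((s+u)/2) with hxdef
    have hx : 0 ≤ x := Finset.sum_nonneg fun i _ => geomMean_nonneg (ha i) (ha' i) (hb i) (hb' i) _
    set Gs : A := geomMean SA SB s with hGs
    set Gu : A := geomMean SA SB u with hGu
    have hGs0 : 0 ≤ Gs := geomMean_nonneg hSA hSA' hSB hSB' s
    have hGu0 : 0 ≤ Gu := geomMean_nonneg hSA hSA' hSB hSB' u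
    have hGs' : IsUnit Gs := geomMean_isUnit hSA hSA' hSB hSB' s
    have hGu' : IsUnit Gu := geomMean_isUnit hSA hSA' hSB hSB' u
    have hsumgs0 : ∀ i, 0 ≤ geomMean (a i) (b i) s :=
      fun i => geomMean_nonneg (ha i) (ha' i) (hb i) (hb' i) s
    have hsumgs' : IsUnit (∑ i, geomMean (a i) (b i) s) :=
      sum_isUnit hn _ hsumgs0 (fun i => geomMean_isUnit (ha i) (ha' i) (hb i) (hb' i) s)
    -- Step A : Cauchy-Schwarz
    have stepA : x * (∑ i, geomMean (a i) (b i) s) ^ (-1:ℝ) * x ≤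
        ∑ i, geomMean (a i) (b i) u := by
      have hCS := sum_conj_le (fun i => geomMean (a i) (b i) ((s+u)/2))
        (fun i => geomMean (a i) (b i) s)
        (fun i => geomMean_nonneg (ha i) (ha' i) (hb i) (hb' i) _)
        hsumgs0
        (fun i => geomMean_isUnit (ha i) (ha' i) (hb i) (hb' i) s)
        hsumgs'
      refine hCS.trans (le_of_eq (Finset.sum_congr rfl fun i _ => ?_))
      rw [geomMean_conj (ha i) (ha' i) (hb i) (hb' i) ((s+u)/2) s,
        show 2*((s+u)/2) - s = u by ring]
    -- Step B : inverse antitone + conjugation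
    have stepB : x * Gs ^ (-1:ℝ) * x ≤ Gu := by
      have hinv : Gs ^ (-1:ℝ) ≤ (∑ i, geomMean (a i) (b i) s) ^ (-1:ℝ) :=
        CStarAlgebra.rpow_neg_one_le_rpow_neg_one
          hs (hsumgs'.isStrictlyPositive (Finset.sum_nonneg fun i _ => hsumgs0 i))
      calc x * Gs ^ (-1:ℝ) * x ≤ x * (∑ i, geomMean (a i) (b i) s) ^ (-1:ℝ) * x :=
            conjugate_le_conjugate_of_nonneg hinv hx
        _ ≤ ∑ i, geomMean (a i) (b i) u := stepA
        _ ≤ Gu := hu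
    have := le_geomMean_half hGs0 hGs' hGu0 hGu' hx stepB
    rwa [geomMean_geomMean hSA hSA' hSB hSB' s u] at this
  -- closedness of Sgood
  have hclosed : IsClosed Sgood := by
    have hcont : Continuous (fun s : ℝ => geomMean SA SB s - ∑ i, geomMean (a i) (b i) s) := by
      have hc1 : ∀ (p q : A), 0 ≤ p → IsUnit p → 0 ≤ q → IsUnit q →
          Continuous (fun s : ℝ => geomMean p q s) := by
        intro p q hp hp' hq hq'
        simp only [geomMean]
        exact (continuous_const.mul (continuous_rpow_exponent (c_nonneg hq)
          (c_isUnit hp hp' hq'))).mul continuous_const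
      exact (hc1 SA SB hSA hSA' hSB hSB').sub
        (continuous_finset_sum _ fun i _ => hc1 (a i) (b i) (ha i) (ha' i) (hb i) (hb' i))
    have : Sgood = (fun s : ℝ => geomMean SA SB s - ∑ i, geomMean (a i) (b i) s) ⁻¹'
        {y : A | 0 ≤ y} := by
      ext s
      simp only [hSgood, Set.mem_setOf_eq, Set.mem_preimage, sub_nonneg]
    rw [this]
    exact CStarAlgebra.isClosed_nonneg.preimage hcont
  -- dyadic rationals
  have hdyadic : ∀ k j : ℕ, j ≤ 2^k → ((j:ℝ)/2^k) ∈ Sgood := by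
    intro k
    induction k with
    | zero =>
      intro j hj
      interval_cases j
      · simpa using h0
      · simpa using h1
    | succ k ih =>
      intro j hj
      have hp : min j (2^k) ≤ 2^k := min_le_right _ _
      have hq : j - min j (2^k) ≤ 2^k := by omega
      have hsum : min j (2^k) + (j - min j (2^k)) = j := by omega
      have := hmid _ _ (ih _ hp) (ih _ hq)
      have heq : (((min j (2^k) : ℕ):ℝ)/2^k + ((j - min j (2^k) : ℕ):ℝ)/2^k)/2 =
          (j:ℝ)/2^(k+1) := by
        rw [← add_div, ← Nat.cast_add, hsum]
        rw [pow_succ]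
        field_simp
        try ring
      rwa [heq] at this
  -- density
  have hseq : Filter.Tendsto (fun k : ℕ => ((⌊t * 2^k⌋₊ : ℕ):ℝ)/2^k) Filter.atTop (nhds t) := by
    have hbound : ∀ k : ℕ, ‖((⌊t * 2^k⌋₊ : ℕ):ℝ)/2^k - t‖ ≤ ((1:ℝ)/2)^k := by
      intro k
      have h2k : (0:ℝ) < 2^k := by positivity
      have hx0 : 0 ≤ t * 2^k := by positivity
      have hfl : ((⌊t * 2^k⌋₊ : ℕ):ℝ) ≤ t * 2^k := Nat.floor_le hx0
      have hfl2 : t * 2^k < (⌊t * 2^k⌋₊ : ℕ) + 1 := Nat.lt_floor_add_one _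
      have key1 : t - ((⌊t * 2^k⌋₊ : ℕ):ℝ)/2^k ≤ 1/2^k := by
        have h' : t ≤ (((⌊t * 2^k⌋₊ : ℕ):ℝ) + 1)/2^k := by
          rw [le_div_iff₀ h2k]; nlinarith
        have h'' : (((⌊t * 2^k⌋₊ : ℕ):ℝ) + 1)/2^k - ((⌊t * 2^k⌋₊ : ℕ):ℝ)/2^k = 1/2^k := by
          ring
        linarith
      have key2 : ((⌊t * 2^k⌋₊ : ℕ):ℝ)/2^k - t ≤ 0 := by
        have h' : ((⌊t * 2^k⌋₊ : ℕ):ℝ)/2^k ≤ t := by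
          rw [div_le_iff₀ h2k]; exact hfl
        linarith
      have hpos : (0:ℝ) ≤ 1/2^k := by positivity
      rw [Real.norm_eq_abs, abs_le, div_pow, one_pow]
      constructor <;> linarith
    have h12 : Filter.Tendsto (fun k : ℕ => ((1:ℝ)/2)^k) Filter.atTop (nhds 0) :=
      tendsto_pow_atTop_nhds_zero_of_lt_one (by norm_num) (by norm_num)
    have hz := squeeze_zero_norm hbound h12
    have := hz.add_const t
    simpa using this
  have hmem : ∀ᶠ k in Filter.atTop, ((⌊t * 2^k⌋₊ : ℕ):ℝ)/2^k ∈ Sgood := by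
    refine Filter.Eventually.of_forall fun k => ?_
    apply hdyadic
    have : t * 2^k ≤ 2^k := by
      have h2k : (0:ℝ) < 2^k := by positivity
      nlinarith
    calc ⌊t * 2^k⌋₊ ≤ ⌊(2^k : ℝ)⌋₊ := Nat.floor_le_floor this
      _ = 2^k := by
          rw [show ((2:ℝ)^k) = ((2^k : ℕ) : ℝ) by push_cast; ring, Nat.floor_natCast]
  exact hclosed.mem_of_tendsto hseq hmem
end

section
/- Let T₁,...,Tₙ be positive invertible operators, w₁,...,wₙ positive reals with Σwᵢ = 1, and 0 < t ≤ 1/2. Then (Σwᵢ Tᵢ)^t - Σwᵢ Tᵢ^t ≤ R(I + ΣwᵢTᵢ - 2ΣwᵢTᵢ^{1/2}) - r₀(ΣwᵢTᵢ^{1/2} + ΣwᵢTᵢ - 2ΣwᵢTᵢ^{3/4}) - r₀((ΣwᵢTᵢ)^{1/2} + I - 2(ΣwᵢTᵢ)^{1/4}), where r = min{t,1-t}, R = max{t,1-t}, r₀ = min{2r,1-2r}. -/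
open scoped NNReal
open Finset


section Scalar

private lemma amgm2 {w₁ w₂ p₁ p₂ : ℝ} (hw₁ : 0 ≤ w₁) (hw₂ : 0 ≤ w₂) (hp₁ : 0 ≤ p₁)
    (hp₂ : 0 ≤ p₂) (hw : w₁ + w₂ = 1) : p₁ ^ w₁ * p₂ ^ w₂ ≤ w₁ * p₁ + w₂ * p₂ := by
  have := Real.geom_mean_le_arith_mean_weighted Finset.univ ![w₁, w₂] ![p₁, p₂]
    (by intro i _; fin_cases i <;> assumption)
    (by simp [Fin.sum_univ_succ]; linarith)
    (by intro i _; fin_cases i <;> assumption)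
  simpa [Fin.prod_univ_succ, Fin.sum_univ_succ] using this

private lemma amgm3 {w₁ w₂ w₃ p₁ p₂ p₃ : ℝ} (hw₁ : 0 ≤ w₁) (hw₂ : 0 ≤ w₂) (hw₃ : 0 ≤ w₃)
    (hp₁ : 0 ≤ p₁) (hp₂ : 0 ≤ p₂) (hp₃ : 0 ≤ p₃) (hw : w₁ + w₂ + w₃ = 1) :
    p₁ ^ w₁ * p₂ ^ w₂ * p₃ ^ w₃ ≤ w₁ * p₁ + w₂ * p₂ + w₃ * p₃ := by
  have := Real.geom_mean_le_arith_mean_weighted Finset.univ ![w₁, w₂, w₃] ![p₁, p₂, p₃]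
    (by intro i _; fin_cases i <;> assumption)
    (by simp [Fin.sum_univ_succ]; linarith)
    (by intro i _; fin_cases i <;> assumption)
  simpa [Fin.prod_univ_succ, Fin.sum_univ_succ, ← add_assoc, ← mul_assoc] using this

private lemma scalarA {μ y : ℝ} (hμ0 : 0 < μ) (hμ1 : μ ≤ 1) (hy : 0 ≤ y) :
    y ^ μ + min μ (1 - μ) * (y ^ ((1:ℝ)/2) - 1) ^ 2 ≤ (1 - μ) + μ * y := by
  rcases hy.eq_or_lt with h0 | hy0
  · rw [← h0, Real.zero_rpow hμ0.ne', Real.zero_rpow (by norm_num : (1:ℝ)/2 ≠ 0)]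
    nlinarith [min_le_right μ (1 - μ)]
  · have hs2 : y ^ ((1:ℝ)/2) * y ^ ((1:ℝ)/2) = y := by
      rw [← Real.rpow_add hy0, show (1:ℝ)/2 + 1/2 = 1 by norm_num, Real.rpow_one]
    have hsnn : 0 ≤ y ^ ((1:ℝ)/2) := Real.rpow_nonneg hy _
    rcases le_or_gt μ (1/2) with hle | hgt
    · rw [min_eq_left (by linarith)]
      have am := amgm2 (w₁ := 1 - 2*μ) (w₂ := 2*μ) (p₁ := 1) (p₂ := y ^ ((1:ℝ)/2))
        (by linarith) (by linarith) zero_le_one hsnn (by ring)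
      have e : (y ^ ((1:ℝ)/2)) ^ (2*μ) = y ^ μ := by
        rw [← Real.rpow_mul hy]; congr 1; ring
      rw [Real.one_rpow, one_mul, e] at am
      nlinarith [am, hs2]
    · rw [min_eq_right (by linarith)]
      have am := amgm2 (w₁ := 2*μ - 1) (w₂ := 2 - 2*μ) (p₁ := y) (p₂ := y ^ ((1:ℝ)/2))
        (by linarith) (by linarith) hy hsnn (by ring)
      have e : y ^ (2*μ - 1) * (y ^ ((1:ℝ)/2)) ^ (2 - 2*μ) = y ^ μ := by
        rw [← Real.rpow_mul hy, ← Real.rpow_add hy0]; congr 1; ring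
      rw [e] at am
      nlinarith [am, hs2]

/-- scalar inequality used for `X = ∑ wᵢ Tᵢ` -/
private lemma scalarC {t : ℝ} (ht0 : 0 < t) (ht : t ≤ 1/2) {x : ℝ} (hx : 0 ≤ x) :
    0 ≤ (1 - t - min (2*t) (1 - 2*t)) + t * x
        + (2 * min (2*t) (1 - 2*t)) * x ^ ((1:ℝ)/4)
        + (-(min (2*t) (1 - 2*t))) * x ^ ((1:ℝ)/2)
        + 0 * x ^ ((3:ℝ)/4) + (-1) * x ^ t := by
  have hm0 : 0 ≤ min (2*t) (1 - 2*t) := le_min (by linarith) (by linarith)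
  have hA := scalarA (μ := 2*t) (y := x ^ ((1:ℝ)/2)) (by linarith) (by linarith)
    (Real.rpow_nonneg hx _)
  have e1 : (x ^ ((1:ℝ)/2)) ^ (2*t) = x ^ t := by
    rw [← Real.rpow_mul hx]; congr 1; ring
  have e2 : (x ^ ((1:ℝ)/2)) ^ ((1:ℝ)/2) = x ^ ((1:ℝ)/4) := by
    rw [← Real.rpow_mul hx]; norm_num
  have e3 : x ^ ((1:ℝ)/2) * x ^ ((1:ℝ)/2) = x := by
    rw [← Real.rpow_add' hx (by norm_num), show (1:ℝ)/2 + 1/2 = 1 by norm_num, Real.rpow_one]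
  have e4 : x ^ ((1:ℝ)/4) * x ^ ((1:ℝ)/4) = x ^ ((1:ℝ)/2) := by
    rw [← Real.rpow_add' hx (by norm_num)]; norm_num
  rw [e1, e2] at hA
  nlinarith [hA, mul_nonneg ht0.le (sq_nonneg (x ^ ((1:ℝ)/2) - 1)), e3, e4, hm0]

/-- scalar inequality used for each `Tᵢ` -/
private lemma scalarB {t : ℝ} (ht0 : 0 < t) (ht : t ≤ 1/2) {x : ℝ} (hx : 0 ≤ x) :
    0 ≤ 0 + (1 - 2*t - min (2*t) (1 - 2*t)) * x
        + 0 * x ^ ((1:ℝ)/4)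
        + (-(2*(1-t) + min (2*t) (1 - 2*t))) * x ^ ((1:ℝ)/2)
        + (2 * min (2*t) (1 - 2*t)) * x ^ ((3:ℝ)/4) + 1 * x ^ t := by
  rcases hx.eq_or_lt with h0 | hx0
  · rw [← h0, Real.zero_rpow ht0.ne', Real.zero_rpow (by norm_num : (1:ℝ)/2 ≠ 0),
      Real.zero_rpow (by norm_num : (1:ℝ)/4 ≠ 0), Real.zero_rpow (by norm_num : (3:ℝ)/4 ≠ 0)]
    ring_nf
    exact le_refl 0
  · rcases le_or_gt (2*t) (1 - 2*t) with hcase | hcase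
    · -- t ≤ 1/4, min = 2t
      rw [min_eq_left hcase]
      have am := amgm3 (w₁ := 1/2) (w₂ := (1 - 4*t)/2) (w₃ := 2*t)
        (p₁ := x ^ t) (p₂ := x) (p₃ := x ^ ((3:ℝ)/4))
        (by norm_num) (by linarith) (by linarith)
        (Real.rpow_nonneg hx _) hx (Real.rpow_nonneg hx _) (by ring)
      have e : (x ^ t) ^ ((1:ℝ)/2) * x ^ ((1 - 4*t)/2) * (x ^ ((3:ℝ)/4)) ^ (2*t)
          = x ^ ((1:ℝ)/2) := by
        rw [← Real.rpow_mul hx, ← Real.rpow_mul hx, ← Real.rpow_add hx0, ← Real.rpow_add hx0]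
        congr 1; ring
      rw [e] at am
      nlinarith [am]
    · -- t > 1/4, min = 1 - 2t
      rw [min_eq_right hcase.le]
      have hs : (0:ℝ) < 3 - 4*t := by linarith
      have am := amgm2 (w₁ := 1/(3 - 4*t)) (w₂ := (2 - 4*t)/(3 - 4*t))
        (p₁ := x ^ t) (p₂ := x ^ ((3:ℝ)/4))
        (div_nonneg zero_le_one hs.le) (div_nonneg (by linarith) hs.le)
        (Real.rpow_nonneg hx _) (Real.rpow_nonneg hx _)
        (by field_simp; ring)
      have e : (x ^ t) ^ (1/(3 - 4*t)) * (x ^ ((3:ℝ)/4)) ^ ((2 - 4*t)/(3 - 4*t))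
          = x ^ ((1:ℝ)/2) := by
        rw [← Real.rpow_mul hx, ← Real.rpow_mul hx, ← Real.rpow_add hx0]
        congr 1; rw [mul_one_div, mul_div_assoc', ← add_div, div_eq_iff hs.ne']; ring
      rw [e] at am

      have am2 := mul_le_mul_of_nonneg_left am hs.le
      have expand : (3 - 4*t) * (1/(3 - 4*t) * x ^ t + (2 - 4*t)/(3 - 4*t) * x ^ ((3:ℝ)/4))
          = x ^ t + (2 - 4*t) * x ^ ((3:ℝ)/4) := by
        field_simp
      rw [expand] at am2
      nlinarith [am2]



variable {A : Type*} [CStarAlgebra A] [PartialOrder A] [StarOrderedRing A]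


private lemma rpow_cfc (a : A) (s : ℝ) (ha : 0 ≤ a) :
    a ^ s = cfc (fun x : ℝ => x ^ s) a := by
  rw [CFC.rpow_def, cfc_nnreal_eq_real (ha := ha)]
  refine cfc_congr fun x hx => ?_
  have hx' : 0 ≤ x := spectrum_nonneg_of_nonneg ha hx
  simp [NNReal.coe_rpow, Real.coe_toNNReal _ hx']

private lemma cfc_combo (a : A) (ha : 0 ≤ a) (c0 c1 c2 c3 c4 c5 t : ℝ) (ht : 0 < t)
    (h : ∀ x : ℝ, 0 ≤ x → 0 ≤ c0 + c1 * x + c2 * x ^ ((1:ℝ)/4) + c3 * x ^ ((1:ℝ)/2)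
      + c4 * x ^ ((3:ℝ)/4) + c5 * x ^ t) :
    0 ≤ c0 • (1:A) + c1 • a + c2 • a ^ ((1:ℝ)/4) + c3 • a ^ ((1:ℝ)/2)
      + c4 • a ^ ((3:ℝ)/4) + c5 • a ^ t := by
  have hsa : IsSelfAdjoint a := .of_nonneg ha
  have hrc : ∀ s : ℝ, 0 ≤ s → ContinuousOn (fun x : ℝ => x ^ s) (spectrum ℝ a) :=
    fun s hs => (Real.continuous_rpow_const hs).continuousOn
  have key : ∀ (c s : ℝ), 0 < s → c • a ^ s = cfc (fun x : ℝ => c * x ^ s) a := fun c s hs => by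
    rw [rpow_cfc a s ha, ← cfc_const_mul c _ a (hrc s hs.le)]
  have G1 : ContinuousOn (fun x : ℝ => c1 * x) (spectrum ℝ a) :=
    (continuous_const.mul continuous_id).continuousOn
  have G2 : ContinuousOn (fun x : ℝ => c2 * x ^ ((1:ℝ)/4)) (spectrum ℝ a) :=
    (continuous_const.mul (Real.continuous_rpow_const (by norm_num))).continuousOn
  have G3 : ContinuousOn (fun x : ℝ => c3 * x ^ ((1:ℝ)/2)) (spectrum ℝ a) :=
    (continuous_const.mul (Real.continuous_rpow_const (by norm_num))).continuousOn
  have G4 : ContinuousOn (fun x : ℝ => c4 * x ^ ((3:ℝ)/4)) (spectrum ℝ a) :=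
    (continuous_const.mul (Real.continuous_rpow_const (by norm_num))).continuousOn
  have G5 : ContinuousOn (fun x : ℝ => c5 * x ^ t) (spectrum ℝ a) :=
    (continuous_const.mul (Real.continuous_rpow_const ht.le)).continuousOn
  have C1 : ContinuousOn (fun x : ℝ => c0 + c1 * x) (spectrum ℝ a) :=
    (continuousOn_const.add G1)
  have C2 := C1.add G2
  have C3 := C2.add G3
  have C4 := C3.add G4
  have main : 0 ≤ cfc (fun x : ℝ => c0 + c1 * x + c2 * x ^ ((1:ℝ)/4) + c3 * x ^ ((1:ℝ)/2)
      + c4 * x ^ ((3:ℝ)/4) + c5 * x ^ t) a :=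
    cfc_nonneg fun x hx => h x (spectrum_nonneg_of_nonneg ha hx)
  rw [cfc_add (a := a) (fun x : ℝ => c0 + c1 * x + c2 * x ^ ((1:ℝ)/4) + c3 * x ^ ((1:ℝ)/2)
      + c4 * x ^ ((3:ℝ)/4)) _ C4 G5, cfc_add (a := a) (fun x : ℝ => c0 + c1 * x + c2 * x ^ ((1:ℝ)/4) + c3 * x ^ ((1:ℝ)/2)) _ C3 G4, cfc_add (a := a) (fun x : ℝ => c0 + c1 * x + c2 * x ^ ((1:ℝ)/4)) _ C2 G3,
    cfc_add (a := a) (fun x : ℝ => c0 + c1 * x) _ C1 G2, cfc_add (a := a) _ _ continuousOn_const G1,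
    cfc_const c0 a, cfc_const_mul_id c1 a] at main
  rw [Algebra.algebraMap_eq_smul_one] at main
  rw [key c2 _ (by norm_num : (0:ℝ) < 1/4), key c3 _ (by norm_num : (0:ℝ) < 1/2),
    key c4 _ (by norm_num : (0:ℝ) < 3/4), key c5 _ ht]
  exact main


/-- Reverse of the operator concavity inequality `∑ wᵢ Tᵢᵗ ≤ (∑ wᵢ Tᵢ)ᵗ` (Example 3.2(i)),
for `0 < t ≤ 1/2`. -/
theorem reverse_operator_concavity (n : ℕ) (T : Fin n → A)
    (hT : ∀ i, 0 ≤ T i) (hT' : ∀ i, IsUnit (T i))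
    (w : Fin n → ℝ) (hw : ∀ i, 0 < w i) (hw1 : ∑ i, w i = 1)
    (t : ℝ) (ht0 : 0 < t) (ht : t ≤ 1 / 2) :
    (∑ i, w i • T i) ^ t - ∑ i, w i • T i ^ t
      ≤ max t (1 - t) •
          (1 + ∑ i, w i • T i - (2 : ℝ) • ∑ i, w i • T i ^ ((1 : ℝ) / 2))
        - min (2 * min t (1 - t)) (1 - 2 * min t (1 - t)) •
            (∑ i, w i • T i ^ ((1 : ℝ) / 2) + ∑ i, w i • T i
              - (2 : ℝ) • ∑ i, w i • T i ^ ((3 : ℝ) / 4))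
        - min (2 * min t (1 - t)) (1 - 2 * min t (1 - t)) •
            ((∑ i, w i • T i) ^ ((1 : ℝ) / 2) + 1
              - (2 : ℝ) • (∑ i, w i • T i) ^ ((1 : ℝ) / 4)) := by
  have hmin : min t (1 - t) = t := min_eq_left (by linarith)
  have hmax : max t (1 - t) = 1 - t := max_eq_right (by linarith)
  rw [hmax, hmin]
  set m := min (2 * t) (1 - 2 * t) with hm
  have hX : 0 ≤ ∑ i, w i • T i := Finset.sum_nonneg fun i _ => smul_nonneg (hw i).le (hT i)
  have h1 := cfc_combo (∑ i, w i • T i) hX (1 - t - m) t (2*m) (-m) 0 (-1) t ht0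
    (fun x hx => by rw [hm]; exact scalarC ht0 ht hx)
  have h2 : ∀ i, 0 ≤ (0:ℝ) • (1:A) + (1 - 2*t - m) • T i + (0:ℝ) • T i ^ ((1:ℝ)/4)
      + (-(2*(1-t) + m)) • T i ^ ((1:ℝ)/2) + (2*m) • T i ^ ((3:ℝ)/4) + (1:ℝ) • T i ^ t :=
    fun i => cfc_combo (T i) (hT i) 0 (1 - 2*t - m) 0 (-(2*(1-t) + m)) (2*m) 1 t ht0
      (fun x hx => by rw [hm]; exact scalarB ht0 ht hx)
  have hswap : ∀ (c : ℝ) (v : Fin n → A), (∑ i, w i • (c • v i)) = c • ∑ i, w i • v i := by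
    intro c v
    rw [Finset.smul_sum]
    exact Finset.sum_congr rfl fun i _ => smul_comm (w i) c (v i)
  have hsum : 0 ≤ ∑ i, w i • ((0:ℝ) • (1:A) + (1 - 2*t - m) • T i + (0:ℝ) • T i ^ ((1:ℝ)/4)
      + (-(2*(1-t) + m)) • T i ^ ((1:ℝ)/2) + (2*m) • T i ^ ((3:ℝ)/4) + (1:ℝ) • T i ^ t) :=
    Finset.sum_nonneg fun i _ => smul_nonneg (hw i).le (h2 i)
  have hsum_eq : (∑ i, w i • ((0:ℝ) • (1:A) + (1 - 2*t - m) • T i + (0:ℝ) • T i ^ ((1:ℝ)/4)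
      + (-(2*(1-t) + m)) • T i ^ ((1:ℝ)/2) + (2*m) • T i ^ ((3:ℝ)/4) + (1:ℝ) • T i ^ t))
      = (1 - 2*t - m) • (∑ i, w i • T i)
        + (-(2*(1-t) + m)) • (∑ i, w i • T i ^ ((1:ℝ)/2))
        + (2*m) • (∑ i, w i • T i ^ ((3:ℝ)/4)) + (∑ i, w i • T i ^ t) := by
    simp only [smul_add, Finset.sum_add_distrib, hswap, zero_smul, one_smul, smul_zero,
      Finset.sum_const_zero, zero_add, add_zero]
  rw [hsum_eq] at hsum
  rw [← sub_nonneg]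
  exact (add_nonneg h1 hsum).trans_eq (by module)
end Scalar
end

section
/- Let A₁,...,Aₙ, B₁,...,Bₙ be positive invertible operators and 0 < t ≤ 1/2. Define the Tsallis relative operator entropy T_t(A|B) = (A♯_t B - A)/t. Then T_t(ΣAᵢ | ΣBᵢ) - Σ T_t(Aᵢ|Bᵢ) ≤ (1/t)[R(ΣAᵢ + ΣBᵢ - 2Σ(Aᵢ♯Bᵢ)) - r₀(Σ(Aᵢ♯Bᵢ) + ΣBᵢ - 2Σ(Aᵢ♯_{3/4}Bᵢ)) - r₀((ΣAᵢ)♯(ΣBᵢ) + ΣAᵢ - 2(ΣAᵢ)♯_{1/4}(ΣBᵢ))], where r = min{t,1-t}, R = max{t,1-t}, r₀ = min{2r,1-2r}. -/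
open scoped NNReal
open Finset

private lemma young_aux_s15 {c z : ℝ} (hc0 : 0 ≤ c) (hc1 : c ≤ 1) (hz : 0 ≤ z) :
    z ^ c ≤ 1 - c + c * z := by
  have h := Real.geom_mean_le_arith_mean2_weighted (w₁ := 1 - c) (w₂ := c)
    (p₁ := 1) (p₂ := z) (by linarith) hc0 zero_le_one hz (by ring)
  simpa using h.trans_eq (by ring)

private lemma km_aux_s15 {s y : ℝ} (hs0 : 0 ≤ s) (hs1 : s ≤ 1) (hy : 0 < y) :
    y ^ s + min s (1 - s) * (y ^ (1/2 : ℝ) - 1) ^ 2 ≤ 1 - s + s * y := by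
  have hy' := hy.le
  have hsq : y ^ (1/2:ℝ) * y ^ (1/2:ℝ) = y := by
    rw [← Real.rpow_add hy]; norm_num
  have hsqnn : 0 ≤ y ^ (1/2:ℝ) := Real.rpow_nonneg hy' _
  rcases le_total s (1/2) with h | h
  · have hmin : min s (1 - s) = s := min_eq_left (by linarith)
    have hys : (y ^ (1/2:ℝ)) ^ (2*s) = y ^ s := by
      rw [← Real.rpow_mul hy']; congr 1; ring
    have hyoung := young_aux_s15 (c := 2*s) (z := y ^ (1/2:ℝ)) (by linarith) (by linarith) hsqnn
    rw [hys] at hyoung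
    rw [hmin]
    nlinarith [hsq, hyoung]
  · have hmin : min s (1 - s) = 1 - s := min_eq_right (by linarith)
    have hgm := Real.geom_mean_le_arith_mean2_weighted (w₁ := 2*s - 1) (w₂ := 2 - 2*s)
      (p₁ := y) (p₂ := y ^ (1/2:ℝ)) (by linarith) (by linarith) hy' hsqnn (by ring)
    have hys : y ^ (2*s-1) * (y ^ (1/2:ℝ)) ^ (2-2*s) = y ^ s := by
      rw [← Real.rpow_mul hy', ← Real.rpow_add hy]; congr 1; ring
    rw [hys] at hgm
    rw [hmin]
    nlinarith [hsq, hgm]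

private lemma upper_aux {t x : ℝ} (ht0 : 0 < t) (ht : t ≤ 1/2) (hx : 0 < x) :
    x ^ t + min (2*t) (1 - 2*t) * (x ^ (1/2:ℝ) + 1 - 2 * x ^ (1/4:ℝ)) ≤ 1 - t + t * x := by
  have h := km_aux_s15 (s := 2*t) (y := x ^ (1/2:ℝ)) (by linarith) (by linarith)
    (Real.rpow_pos_of_pos hx _)
  have h1 : (x ^ (1/2:ℝ)) ^ (2*t) = x ^ t := by rw [← Real.rpow_mul hx.le]; congr 1; ring
  have h2 : (x ^ (1/2:ℝ)) ^ ((1:ℝ)/2) = x ^ (1/4:ℝ) := by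
    rw [← Real.rpow_mul hx.le]; norm_num
  rw [h1, h2] at h
  have hq : x ^ (1/2:ℝ) * x ^ (1/2:ℝ) = x := by rw [← Real.rpow_add hx]; norm_num
  have h44 : x ^ (1/4:ℝ) * x ^ (1/4:ℝ) = x ^ (1/2:ℝ) := by rw [← Real.rpow_add hx]; norm_num
  have e1 : t * (x ^ (1/2:ℝ) * x ^ (1/2:ℝ)) = t * x := by rw [hq]
  have e2 : (2*t ⊓ (1-2*t)) * (x ^ (1/4:ℝ) * x ^ (1/4:ℝ)) = (2*t ⊓ (1-2*t)) * x ^ (1/2:ℝ) := by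
    rw [h44]
  linarith [h, e1, e2, mul_nonneg ht0.le (sq_nonneg (x ^ (1/2:ℝ) - 1))]

private lemma lower_aux {t x : ℝ} (ht0 : 0 < t) (ht : t ≤ 1/2) (hx : 0 < x) :
    1 - t + t * x - (1-t) * (1 + x - 2 * x ^ (1/2:ℝ))
      + min (2*t) (1 - 2*t) * (x ^ (1/2:ℝ) + x - 2 * x ^ (3/4:ℝ)) ≤ x ^ t := by
  set r := min (2*t) (1 - 2*t) with hr
  have hr0 : 0 ≤ r := le_min (by linarith) (by linarith)
  have hq0 : (0:ℝ) < x ^ (1/2:ℝ) := Real.rpow_pos_of_pos hx _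
  have hu0 : (0:ℝ) < x ^ (1/4:ℝ) := Real.rpow_pos_of_pos hx _
  have hp0 : (0:ℝ) < x ^ (t - 1/2 :ℝ) := Real.rpow_pos_of_pos hx _
  have hpq0 : (0:ℝ) < x ^ (1/2 - t :ℝ) := Real.rpow_pos_of_pos hx _
  have hq : x ^ (1/2:ℝ) * x ^ (1/2:ℝ) = x := by rw [← Real.rpow_add hx]; norm_num
  have hu : x ^ (1/4:ℝ) * x ^ (1/4:ℝ) = x ^ (1/2:ℝ) := by rw [← Real.rpow_add hx]; norm_num
  have hv : x ^ (1/2:ℝ) * x ^ (1/4:ℝ) = x ^ (3/4:ℝ) := by rw [← Real.rpow_add hx]; norm_num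
  have hpq : x ^ (t - 1/2:ℝ) * x ^ (1/2 - t:ℝ) = 1 := by rw [← Real.rpow_add hx]; norm_num
  have hg : x ^ (t - 1/2:ℝ) * x ^ (1/2:ℝ) = x ^ t := by
    rw [← Real.rpow_add hx]; congr 1; ring
  -- km at parameter 1-2t, variable y = x^{1/2}
  have hkm := km_aux_s15 (s := 1 - 2*t) (y := x ^ (1/2:ℝ)) (by linarith) (by linarith) hq0
  have h1 : (x ^ (1/2:ℝ)) ^ (1 - 2*t) = x ^ (1/2 - t:ℝ) := by
    rw [← Real.rpow_mul hx.le]; congr 1; ring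
  have h2 : (x ^ (1/2:ℝ)) ^ ((1:ℝ)/2) = x ^ (1/4:ℝ) := by
    rw [← Real.rpow_mul hx.le]; norm_num
  have h3 : min (1 - 2*t) (1 - (1 - 2*t)) = r := by rw [hr, min_comm]; norm_num
  rw [h1, h2, h3] at hkm
  -- hkm : x^(1/2-t) + r*(x^{1/4} - 1)^2 ≤ 1 - (1-2t) + (1-2t)*x^{1/2}
  -- AM-GM: p + q ≥ 2
  have hamgm : 2 ≤ x ^ (t - 1/2:ℝ) + x ^ (1/2 - t:ℝ) := by
    nlinarith [mul_nonneg (sq_nonneg (x ^ (t - 1/2:ℝ) - 1)) hpq0.le, hpq]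
  -- lower bound on p
  have hD : 2 - 2*t - (1 - 2*t) * x ^ (1/2:ℝ) + r * (x ^ (1/4:ℝ) - 1)^2
      ≤ x ^ (t - 1/2:ℝ) := by linarith
  have hmul := mul_le_mul_of_nonneg_right hD hq0.le
  rw [hg] at hmul
  have eq1 : r * ((x ^ (1/4:ℝ) - 1)^2 * x ^ (1/2:ℝ))
      = r * (x ^ (1/2:ℝ) + x - 2 * x ^ (3/4:ℝ)) := by
    linear_combination (r * x ^ (1/2:ℝ)) * hu + r * hq - 2 * r * hv
  have eq2 : (1 - 2*t) * (x ^ (1/2:ℝ) * x ^ (1/2:ℝ)) = (1 - 2*t) * x := by rw [hq]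
  linarith [hmul, eq1, eq2]

variable {A : Type*} [CStarAlgebra A] [PartialOrder A] [StarOrderedRing A]


private lemma rpow_eq_cfc_real {a : A} (ha : 0 ≤ a) (s : ℝ) :
    a ^ s = cfc (fun x : ℝ => x ^ s) a := by
  rw [CFC.rpow_def, cfc_nnreal_eq_real _ _ ha]
  apply cfc_congr
  intro x hx
  have hx' : (0:ℝ) ≤ x := spectrum_nonneg_of_nonneg ha hx
  show ((x.toNNReal ^ s : ℝ≥0) : ℝ) = x ^ s
  rw [NNReal.coe_rpow, Real.coe_toNNReal x hx']

private lemma isUnit_rpow {a : A} (ha : 0 ≤ a) (ha' : IsUnit a) (s : ℝ) : IsUnit (a ^ s) := by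
  have h0 : (0 : ℝ≥0) ∉ spectrum ℝ≥0 a := spectrum.zero_notMem ℝ≥0 ha'
  exact ⟨⟨a ^ s, a ^ (-s), CFC.rpow_mul_rpow_neg s (IsStrictlyPositive.iff_of_unital.mpr ⟨ha, ha'⟩), CFC.rpow_neg_mul_rpow s (IsStrictlyPositive.iff_of_unital.mpr ⟨ha, ha'⟩)⟩, rfl⟩

private lemma spectrum_pos_of_unit {c : A} (hc : 0 ≤ c) (hc' : IsUnit c) :
    ∀ x ∈ spectrum ℝ c, (0:ℝ) < x := by
  intro x hx
  have h1 : (0:ℝ) ≤ x := spectrum_nonneg_of_nonneg hc hx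
  have h2 : x ≠ 0 := fun h => (spectrum.zero_notMem ℝ hc') (h ▸ hx)
  exact h1.lt_of_ne' h2

/-- The Tsallis relative operator entropy `T_t(a|b) = (a ♯_t b - a) / t`. -/
noncomputable def tsallis (a b : A) (t : ℝ) : A := (1 / t) • (geomMean a b t - a)

private lemma cfc_lin (c : A) (hc : 0 ≤ c) (hc' : IsUnit c) (e₂ k₀ k₁ k₂ k₃ k₄ k₅ : ℝ) :
    cfc (fun x : ℝ => k₀ + (k₁ * x + (k₂ * x ^ e₂ + (k₃ * x ^ (1/2:ℝ) +
        (k₄ * x ^ (1/4:ℝ) + k₅ * x ^ (3/4:ℝ)))))) c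
      = k₀ • (1:A) + (k₁ • c + (k₂ • c ^ e₂ + (k₃ • c ^ (1/2:ℝ) +
        (k₄ • c ^ (1/4:ℝ) + k₅ • c ^ (3/4:ℝ))))) := by
  have hsa : IsSelfAdjoint c := .of_nonneg hc
  have hsp := spectrum_pos_of_unit hc hc'
  have hcont : ∀ s : ℝ, ContinuousOn (fun x : ℝ => x ^ s) (spectrum ℝ c) := fun s x hx =>
    (Real.continuousAt_rpow_const x s (Or.inl (hsp x hx).ne')).continuousWithinAt
  have c5 : ContinuousOn (fun x : ℝ => k₅ * x ^ (3/4:ℝ)) (spectrum ℝ c) :=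
    continuousOn_const.mul (hcont _)
  have c45 : ContinuousOn (fun x : ℝ => k₄ * x ^ (1/4:ℝ) + k₅ * x ^ (3/4:ℝ)) (spectrum ℝ c) :=
    (continuousOn_const.mul (hcont _)).add c5
  have c345 : ContinuousOn (fun x : ℝ => k₃ * x ^ (1/2:ℝ) +
      (k₄ * x ^ (1/4:ℝ) + k₅ * x ^ (3/4:ℝ))) (spectrum ℝ c) :=
    (continuousOn_const.mul (hcont _)).add c45
  have c2345 : ContinuousOn (fun x : ℝ => k₂ * x ^ e₂ + (k₃ * x ^ (1/2:ℝ) +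
      (k₄ * x ^ (1/4:ℝ) + k₅ * x ^ (3/4:ℝ)))) (spectrum ℝ c) :=
    (continuousOn_const.mul (hcont _)).add c345
  have c12345 : ContinuousOn (fun x : ℝ => k₁ * x + (k₂ * x ^ e₂ + (k₃ * x ^ (1/2:ℝ) +
      (k₄ * x ^ (1/4:ℝ) + k₅ * x ^ (3/4:ℝ))))) (spectrum ℝ c) :=
    ((continuous_mul_left k₁).continuousOn).add c2345
  rw [cfc_const_add _ _ _ c12345 hsa,
      cfc_add c _ _ ((continuous_mul_left k₁).continuousOn) c2345,
      cfc_add c (fun x => k₂ * x ^ e₂) _ (continuousOn_const.mul (hcont _)) c345,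
      cfc_add c (fun x => k₃ * x ^ (1/2:ℝ)) _ (continuousOn_const.mul (hcont _)) c45,
      cfc_add c (fun x => k₄ * x ^ (1/4:ℝ)) _ (continuousOn_const.mul (hcont _)) c5,
      cfc_const_mul_id _ _ hsa,
      cfc_const_mul _ _ _ (hcont _), cfc_const_mul _ _ _ (hcont _),
      cfc_const_mul _ _ _ (hcont _), cfc_const_mul _ _ _ (hcont _)]
  simp only [← rpow_eq_cfc_real hc]
  rw [Algebra.algebraMap_eq_smul_one]

private lemma geom_combo (a b : A) (ha : 0 ≤ a) (ha' : IsUnit a) (hb : 0 ≤ b) (hb' : IsUnit b)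
    (e₂ k₀ k₁ k₂ k₃ k₄ k₅ m₀ m₁ m₂ m₃ m₄ m₅ : ℝ)
    (hpt : ∀ x : ℝ, 0 < x →
      k₀ + (k₁ * x + (k₂ * x ^ e₂ + (k₃ * x ^ (1/2:ℝ) + (k₄ * x ^ (1/4:ℝ) + k₅ * x ^ (3/4:ℝ)))))
        ≤ m₀ + (m₁ * x + (m₂ * x ^ e₂ + (m₃ * x ^ (1/2:ℝ) +
            (m₄ * x ^ (1/4:ℝ) + m₅ * x ^ (3/4:ℝ)))))) :
    k₀ • a + (k₁ • b + (k₂ • geomMean a b e₂ + (k₃ • geomMean a b (1/2) +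
        (k₄ • geomMean a b (1/4) + k₅ • geomMean a b (3/4)))))
      ≤ m₀ • a + (m₁ • b + (m₂ • geomMean a b e₂ + (m₃ • geomMean a b (1/2) +
        (m₄ • geomMean a b (1/4) + m₅ • geomMean a b (3/4))))) := by
  have h0A : (0:ℝ≥0) ∉ spectrum ℝ≥0 a := spectrum.zero_notMem ℝ≥0 ha'
  simp only [geomMean]
  set u : A := a ^ ((1:ℝ)/2) with hu
  set c : A := a ^ (-(1:ℝ)/2) * b * a ^ (-(1:ℝ)/2) with hcdef
  have husa : IsSelfAdjoint u := .of_nonneg CFC.rpow_nonneg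
  have hwsa : IsSelfAdjoint (a ^ (-(1:ℝ)/2)) := .of_nonneg CFC.rpow_nonneg
  have hc : 0 ≤ c := hwsa.conjugate_nonneg hb
  have hcu : IsUnit c := ((isUnit_rpow ha ha' _).mul hb').mul (isUnit_rpow ha ha' _)
  have hsp := spectrum_pos_of_unit hc hcu
  have hcont : ∀ s : ℝ, ContinuousOn (fun x : ℝ => x ^ s) (spectrum ℝ c) := fun s x hx =>
    (Real.continuousAt_rpow_const x s (Or.inl (hsp x hx).ne')).continuousWithinAt
  have CC : ∀ j₀ j₁ j₂ j₃ j₄ j₅ : ℝ, ContinuousOn (fun x : ℝ => j₀ + (j₁ * x + (j₂ * x ^ e₂ +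
      (j₃ * x ^ (1/2:ℝ) + (j₄ * x ^ (1/4:ℝ) + j₅ * x ^ (3/4:ℝ)))))) (spectrum ℝ c) :=
    fun j₀ j₁ j₂ j₃ j₄ j₅ => continuousOn_const.add (((continuous_mul_left j₁).continuousOn).add
      ((continuousOn_const.mul (hcont _)).add ((continuousOn_const.mul (hcont _)).add
        ((continuousOn_const.mul (hcont _)).add (continuousOn_const.mul (hcont _))))))
  have key : cfc (fun x : ℝ => k₀ + (k₁ * x + (k₂ * x ^ e₂ + (k₃ * x ^ (1/2:ℝ) +
        (k₄ * x ^ (1/4:ℝ) + k₅ * x ^ (3/4:ℝ)))))) c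
      ≤ cfc (fun x : ℝ => m₀ + (m₁ * x + (m₂ * x ^ e₂ + (m₃ * x ^ (1/2:ℝ) +
        (m₄ * x ^ (1/4:ℝ) + m₅ * x ^ (3/4:ℝ)))))) c :=
    cfc_mono (fun x hx => hpt x (hsp x hx)) (CC k₀ k₁ k₂ k₃ k₄ k₅) (CC m₀ m₁ m₂ m₃ m₄ m₅)
  have conj := husa.conjugate_le_conjugate key
  rw [cfc_lin c hc hcu e₂ k₀ k₁ k₂ k₃ k₄ k₅, cfc_lin c hc hcu e₂ m₀ m₁ m₂ m₃ m₄ m₅] at conj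
  have expand : ∀ (j₀ j₁ j₂ j₃ j₄ j₅ : ℝ) (e₀ f₁ f₂ f₃ f₄ f₅ : A),
      u * (j₀ • e₀ + (j₁ • f₁ + (j₂ • f₂ + (j₃ • f₃ + (j₄ • f₄ + j₅ • f₅))))) * u
        = j₀ • (u * e₀ * u) + (j₁ • (u * f₁ * u) + (j₂ • (u * f₂ * u) +
            (j₃ • (u * f₃ * u) + (j₄ • (u * f₄ * u) + j₅ • (u * f₅ * u))))) := by
    intros
    simp only [mul_add, add_mul, mul_smul_comm, smul_mul_assoc]
  rw [expand, expand] at conj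
  have E0 : u * 1 * u = a := by
    rw [mul_one, hu, ← CFC.rpow_add ha']
    have : (1:ℝ)/2 + (1:ℝ)/2 = 1 := by norm_num
    rw [this, CFC.rpow_one a ha]
  have hneg : a ^ (-(1:ℝ)/2) = a ^ (-((1:ℝ)/2)) := by norm_num
  have E1 : u * c * u = b := by
    rw [hcdef, hu, hneg]
    simp only [← mul_assoc]
    rw [CFC.rpow_mul_rpow_neg _ (IsStrictlyPositive.iff_of_unital.mpr ⟨ha, ha'⟩), one_mul, mul_assoc,
      CFC.rpow_neg_mul_rpow _ (IsStrictlyPositive.iff_of_unital.mpr ⟨ha, ha'⟩), mul_one]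
  rw [E0, E1] at conj
  exact conj

private lemma op_upper (a b : A) (ha : 0 ≤ a) (ha' : IsUnit a) (hb : 0 ≤ b) (hb' : IsUnit b)
    {t : ℝ} (ht0 : 0 < t) (ht : t ≤ 1/2) :
    geomMean a b t + min (2*t) (1-2*t) • (geomMean a b (1/2) + a - (2:ℝ) • geomMean a b (1/4))
      ≤ (1-t) • a + t • b := by
  have h := geom_combo a b ha ha' hb hb' t
    (min (2*t) (1-2*t)) 0 1 (min (2*t) (1-2*t)) (-(2*min (2*t) (1-2*t))) 0
    (1-t) t 0 0 0 0
    (fun x hx => by have h := upper_aux ht0 ht hx; linarith)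
  calc geomMean a b t
      + min (2*t) (1-2*t) • (geomMean a b (1/2) + a - (2:ℝ) • geomMean a b (1/4))
      = (min (2*t) (1-2*t)) • a + ((0:ℝ) • b + ((1:ℝ) • geomMean a b t +
          ((min (2*t) (1-2*t)) • geomMean a b (1/2) +
          ((-(2*min (2*t) (1-2*t))) • geomMean a b (1/4) + (0:ℝ) • geomMean a b (3/4))))) := by
        module
    _ ≤ (1-t) • a + (t • b + ((0:ℝ) • geomMean a b t + ((0:ℝ) • geomMean a b (1/2) +
          ((0:ℝ) • geomMean a b (1/4) + (0:ℝ) • geomMean a b (3/4))))) := h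
    _ = (1-t) • a + t • b := by module

private lemma op_lower (a b : A) (ha : 0 ≤ a) (ha' : IsUnit a) (hb : 0 ≤ b) (hb' : IsUnit b)
    {t : ℝ} (ht0 : 0 < t) (ht : t ≤ 1/2) :
    (1-t) • a + t • b - (1-t) • (a + b - (2:ℝ) • geomMean a b (1/2))
      + min (2*t) (1-2*t) • (geomMean a b (1/2) + b - (2:ℝ) • geomMean a b (3/4))
      ≤ geomMean a b t := by
  have h := geom_combo a b ha ha' hb hb' t
    0 (2*t - 1 + min (2*t) (1-2*t)) 0 (2 - 2*t + min (2*t) (1-2*t)) 0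
    (-(2*min (2*t) (1-2*t)))
    0 0 1 0 0 0
    (fun x hx => by have h := lower_aux ht0 ht hx; linarith)
  calc (1-t) • a + t • b - (1-t) • (a + b - (2:ℝ) • geomMean a b (1/2))
      + min (2*t) (1-2*t) • (geomMean a b (1/2) + b - (2:ℝ) • geomMean a b (3/4))
      = (0:ℝ) • a + ((2*t - 1 + min (2*t) (1-2*t)) • b + ((0:ℝ) • geomMean a b t +
          ((2 - 2*t + min (2*t) (1-2*t)) • geomMean a b (1/2) + ((0:ℝ) • geomMean a b (1/4) +
          (-(2*min (2*t) (1-2*t))) • geomMean a b (3/4))))) := by module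
    _ ≤ (0:ℝ) • a + ((0:ℝ) • b + ((1:ℝ) • geomMean a b t + ((0:ℝ) • geomMean a b (1/2) +
          ((0:ℝ) • geomMean a b (1/4) + (0:ℝ) • geomMean a b (3/4))))) := h
    _ = geomMean a b t := by module

private lemma real_smul_le_smul {r : ℝ} (hr : 0 ≤ r) {x y : A} (h : x ≤ y) : r • x ≤ r • y := by
  have key : ∀ z : A, star (algebraMap ℝ A (Real.sqrt r)) * z * algebraMap ℝ A (Real.sqrt r)
      = r • z := by
    intro z
    have hsa : IsSelfAdjoint (algebraMap ℝ A (Real.sqrt r)) :=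
      IsSelfAdjoint.algebraMap A (star_trivial _)
    rw [hsa.star_eq, Algebra.commutes (Real.sqrt r) z, mul_assoc, ← map_mul,
      Real.mul_self_sqrt hr, ← Algebra.commutes r z, ← Algebra.smul_def]
  calc r • x = _ := (key x).symm
    _ ≤ _ := star_left_conjugate_le_conjugate h _
    _ = r • y := key y

/-- Reverse of the superadditivity of the Tsallis relative operator entropy
(Theorem 3.3(i)), for `0 < t ≤ 1/2`. -/
theorem reverse_tsallis_superadditivity (n : ℕ) (a b : Fin n → A)
    (ha : ∀ i, 0 ≤ a i) (ha' : ∀ i, IsUnit (a i))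
    (hb : ∀ i, 0 ≤ b i) (hb' : ∀ i, IsUnit (b i))
    (t : ℝ) (ht0 : 0 < t) (ht : t ≤ 1 / 2) :
    tsallis (∑ i, a i) (∑ i, b i) t - ∑ i, tsallis (a i) (b i) t
      ≤ (1 / t) •
          (max t (1 - t) •
              (∑ i, a i + ∑ i, b i - (2 : ℝ) • ∑ i, geomMean (a i) (b i) (1 / 2))
            - min (2 * min t (1 - t)) (1 - 2 * min t (1 - t)) •
                (∑ i, geomMean (a i) (b i) (1 / 2) + ∑ i, b i
                  - (2 : ℝ) • ∑ i, geomMean (a i) (b i) (3 / 4))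
            - min (2 * min t (1 - t)) (1 - 2 * min t (1 - t)) •
                (geomMean (∑ i, a i) (∑ i, b i) (1 / 2) + ∑ i, a i
                  - (2 : ℝ) • geomMean (∑ i, a i) (∑ i, b i) (1 / 4))) := by
  have hmin : min t (1 - t) = t := min_eq_left (by linarith)
  have hmax : max t (1 - t) = 1 - t := max_eq_right (by linarith)
  rw [hmin, hmax]
  rcases Nat.eq_zero_or_pos n with hn | hn
  · subst hn
    have hg0 : ∀ s : ℝ, s ≠ 0 → geomMean (0:A) 0 s = 0 := by
      intro s hs
      rw [geomMean, show ((0:A) ^ ((1:ℝ)/2)) = 0 from CFC.zero_rpow (by norm_num)]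
      simp
    simp only [Finset.univ_eq_empty, Finset.sum_empty, tsallis,
      hg0 t ht0.ne', hg0 (1/2) (by norm_num), hg0 (1/4) (by norm_num)]
    simp
  · have hS : 0 ≤ ∑ i, a i := Finset.sum_nonneg fun i _ => ha i
    have hT : 0 ≤ ∑ i, b i := Finset.sum_nonneg fun i _ => hb i
    obtain ⟨i0⟩ : Nonempty (Fin n) := Fin.pos_iff_nonempty.mp hn
    have hS' : IsUnit (∑ i, a i) :=
      CStarAlgebra.isUnit_of_le (a i0)
        (Finset.single_le_sum (fun i _ => ha i) (Finset.mem_univ i0)) (IsStrictlyPositive.iff_of_unital.mpr ⟨ha i0, ha' i0⟩)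
    have hT' : IsUnit (∑ i, b i) :=
      CStarAlgebra.isUnit_of_le (b i0)
        (Finset.single_le_sum (fun i _ => hb i) (Finset.mem_univ i0)) (IsStrictlyPositive.iff_of_unital.mpr ⟨hb i0, hb' i0⟩)
    simp only [tsallis]
    rw [← Finset.smul_sum, ← smul_sub]
    refine real_smul_le_smul (by positivity) ?_
    have h1 := op_upper _ _ hS hS' hT hT' ht0 ht
    have h1' : geomMean (∑ i, a i) (∑ i, b i) t
        ≤ ((1-t) • ∑ i, a i + t • ∑ i, b i)
          - min (2*t) (1-2*t) • (geomMean (∑ i, a i) (∑ i, b i) (1/2) + ∑ i, a i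
            - (2:ℝ) • geomMean (∑ i, a i) (∑ i, b i) (1/4)) :=
      le_sub_iff_add_le.mpr h1
    have h2 : ∑ i, ((1-t) • a i + t • b i
          - (1-t) • (a i + b i - (2:ℝ) • geomMean (a i) (b i) (1/2))
          + min (2*t) (1-2*t) • (geomMean (a i) (b i) (1/2) + b i
            - (2:ℝ) • geomMean (a i) (b i) (3/4)))
        ≤ ∑ i, geomMean (a i) (b i) t :=
      Finset.sum_le_sum fun i _ => op_lower _ _ (ha i) (ha' i) (hb i) (hb' i) ht0 ht
    have hsum : ∑ i, ((1-t) • a i + t • b i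
          - (1-t) • (a i + b i - (2:ℝ) • geomMean (a i) (b i) (1/2))
          + min (2*t) (1-2*t) • (geomMean (a i) (b i) (1/2) + b i
            - (2:ℝ) • geomMean (a i) (b i) (3/4)))
        = (1-t) • ∑ i, a i + t • ∑ i, b i
          - (1-t) • (∑ i, a i + ∑ i, b i - (2:ℝ) • ∑ i, geomMean (a i) (b i) (1/2))
          + min (2*t) (1-2*t) • (∑ i, geomMean (a i) (b i) (1/2) + ∑ i, b i
            - (2:ℝ) • ∑ i, geomMean (a i) (b i) (3/4)) := by
      simp only [Finset.sum_add_distrib, Finset.sum_sub_distrib, ← Finset.smul_sum]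
    rw [hsum] at h2
    calc geomMean (∑ i, a i) (∑ i, b i) t - ∑ i, a i
          - ∑ i, (geomMean (a i) (b i) t - a i)
        = geomMean (∑ i, a i) (∑ i, b i) t - ∑ i, geomMean (a i) (b i) t := by
          rw [Finset.sum_sub_distrib]; abel
      _ ≤ (((1-t) • ∑ i, a i + t • ∑ i, b i)
            - min (2*t) (1-2*t) • (geomMean (∑ i, a i) (∑ i, b i) (1/2) + ∑ i, a i
              - (2:ℝ) • geomMean (∑ i, a i) (∑ i, b i) (1/4)))
          - ((1-t) • ∑ i, a i + t • ∑ i, b i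
            - (1-t) • (∑ i, a i + ∑ i, b i - (2:ℝ) • ∑ i, geomMean (a i) (b i) (1/2))
            + min (2*t) (1-2*t) • (∑ i, geomMean (a i) (b i) (1/2) + ∑ i, b i
              - (2:ℝ) • ∑ i, geomMean (a i) (b i) (3/4))) := sub_le_sub h1' h2
      _ = _ := by module
end
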